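/- arXiv:2112.00932 — 7 statements merged into one kernel-verified Lean document; each statement's English description precedes it below -/
import Mathlib

section
/- Let X, Y, W be real square-integrable random variables such that W is independent of the pair (X, Y) and Var(Y) + Var(W) > 0. Then the map λ ↦ Var(X − λ(Y − W)) attains its unique minimum over ℝ at λ̃* = Cov(X, Y)/(Var(Y) + Var(W)). In particular, if p is a probability distribution, f and g are real square-integrable functions of a p-distributed variable with Var_p(g) > 0, (Z_k)_{k=1}^M is an i.i.d. p-distributed sample, (Z'_j)_{j=1}^{M_E} is an i.i.d. p-distributed sample independent of (Z_k), and X = (1/M)∑_k f(Z_k), Y = (1/M)∑_k g(Z_k), W = (1/M_E)∑_j g(Z'_j), then λ̃* = (M_E/(M + M_E))·Cov_p(f, g)/Var_p(g). -/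
/-!
`Var(X - λU) = Var X - 2λ Cov(X, U) + λ² Var U` is a quadratic in `λ` with leading coefficient
`Var U`, so it is uniquely minimised at `Cov(X, U) / Var U`. For `U = Y - W` with `W` independent
of `(X, Y)`, `Cov(X, U) = Cov(X, Y)` and `Var U = Var Y + Var W`. For means of i.i.d. samples all
cross-covariances between distinct draws vanish, so `Cov(X, Y) = Cov_p(f, g) / M`,
`Var Y = Var_p(g) / M` and `Var W = Var_p(g) / M_E`, and the coefficient simplifies to
`M_E / (M + M_E) · Cov_p(f, g) / Var_p(g)`.
-/

open MeasureTheory ProbabilityTheory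

noncomputable def cov {Ω : Type*} [MeasurableSpace Ω] (P : Measure Ω) (X Y : Ω → ℝ) : ℝ :=
  ∫ ω, (X ω - ∫ ω', X ω' ∂P) * (Y ω - ∫ ω', Y ω' ∂P) ∂P

theorem cov_eq_covariance {Ω : Type*} [MeasurableSpace Ω] (P : Measure Ω) (X Y : Ω → ℝ) :
    cov P X Y = covariance X Y P :=
  rfl

section ControlVariate

variable {Ω : Type*} [MeasurableSpace Ω] {P : Measure Ω} [IsFiniteMeasure P] {X Y W : Ω → ℝ}

theorem variance_sub_const_mul (hX : MemLp X 2 P) (hY : MemLp Y 2 P) (l : ℝ) :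
    variance (fun ω => X ω - l * Y ω) P
      = variance X P - 2 * l * covariance X Y P + l ^ 2 * variance Y P := by
  rw [variance_fun_sub hX (hY.const_mul l), covariance_const_mul_right, variance_const_mul]
  ring

theorem variance_sub_optimal_mul_lt (hX : MemLp X 2 P) (hY : MemLp Y 2 P)
    (hvar : 0 < variance Y P) {l : ℝ} (hl : l ≠ covariance X Y P / variance Y P) :
    variance (fun ω => X ω - covariance X Y P / variance Y P * Y ω) P
      < variance (fun ω => X ω - l * Y ω) P := by
  set c := covariance X Y P
  set v := variance Y P
  have hgap : 0 < v * (l - c / v) ^ 2 := mul_pos hvar (sq_pos_of_ne_zero (sub_ne_zero.2 hl))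
  have hdiff : (variance X P - 2 * l * c + l ^ 2 * v)
      - (variance X P - 2 * (c / v) * c + (c / v) ^ 2 * v) = v * (l - c / v) ^ 2 := by
    field_simp
    ring
  rw [variance_sub_const_mul hX hY, variance_sub_const_mul hX hY]
  linarith

theorem ProbabilityTheory.IndepFun.variance_fun_sub (hY : MemLp Y 2 P) (hW : MemLp W 2 P)
    (h : IndepFun Y W P) :
    variance (fun ω => Y ω - W ω) P = variance Y P + variance W P := by
  rw [ProbabilityTheory.variance_fun_sub hY hW, h.covariance_eq_zero hY hW]
  ring

theorem ProbabilityTheory.IndepFun.covariance_fun_sub_right (hX : MemLp X 2 P)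
    (hY : MemLp Y 2 P) (hW : MemLp W 2 P) (h : IndepFun X W P) :
    covariance X (fun ω => Y ω - W ω) P = covariance X Y P := by
  rw [ProbabilityTheory.covariance_fun_sub_right hX hY hW, h.covariance_eq_zero hX hW, sub_zero]

theorem variance_control_variate_lt (hX : MemLp X 2 P) (hY : MemLp Y 2 P) (hW : MemLp W 2 P)
    (hindep : IndepFun (fun ω => (X ω, Y ω)) W P) (hpos : 0 < variance Y P + variance W P)
    {l : ℝ} (hl : l ≠ covariance X Y P / (variance Y P + variance W P)) :
    variance (fun ω => X ω - covariance X Y P / (variance Y P + variance W P) * (Y ω - W ω)) P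
      < variance (fun ω => X ω - l * (Y ω - W ω)) P := by
  have hcov := (hindep.comp measurable_fst measurable_id).covariance_fun_sub_right hX hY hW
  have hvar := (hindep.comp measurable_snd measurable_id).variance_fun_sub hY hW
  rw [← hvar] at hpos
  rw [← hcov, ← hvar] at hl ⊢
  exact variance_sub_optimal_mul_lt hX (hY.sub hW) hpos hl

end ControlVariate

section SampleMean

variable {Ω Z ι : Type*} [MeasurableSpace Ω] [MeasurableSpace Z] {P : Measure Ω}
  {p : Measure Z} [NeZero p] {S : ι → Ω → Z} {φ ψ : Z → ℝ}

theorem aemeasurable_of_map_eq {X : Ω → Z} (h : P.map X = p) : AEMeasurable X P :=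
  aemeasurable_of_map_neZero (h ▸ inferInstance)

theorem memLp_comp_of_map_eq {X : Ω → Z} (h : P.map X = p) (hφ : MemLp φ 2 p) :
    MemLp (fun ω => φ (X ω)) 2 P :=
  MemLp.comp_of_map (h ▸ hφ) (aemeasurable_of_map_eq h)

theorem memLp_sampleMean (hlaw : ∀ i, P.map (S i) = p) (hφ : MemLp φ 2 p)
    {N : ℕ} (T : Fin N → ι) :
    MemLp (fun ω => (N : ℝ)⁻¹ * ∑ k, φ (S (T k) ω)) 2 P :=
  (memLp_finsetSum _ fun k _ => memLp_comp_of_map_eq (hlaw (T k)) hφ).const_mul _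

theorem covariance_comp_of_map_eq {X : Ω → Z} (h : P.map X = p)
    (hφ : AEStronglyMeasurable φ p) (hψ : AEStronglyMeasurable ψ p) :
    covariance (fun ω => φ (X ω)) (fun ω => ψ (X ω)) P = covariance φ ψ p := by
  subst h
  exact (covariance_map_fun hφ hψ (aemeasurable_of_map_eq rfl)).symm

theorem covariance_comp_eq_zero_of_indepFun {X X' : Ω → Z} (h : IndepFun X X' P)
    (hX : P.map X = p) (hX' : P.map X' = p) (hφ : MemLp φ 2 p) (hψ : MemLp ψ 2 p) :
    covariance (fun ω => φ (X ω)) (fun ω => ψ (X' ω)) P = 0 :=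
  (h.comp₀ (aemeasurable_of_map_eq hX) (aemeasurable_of_map_eq hX')
    (hX ▸ hφ.1.aemeasurable) (hX' ▸ hψ.1.aemeasurable)).covariance_eq_zero
    ((hX ▸ hφ).comp_of_map (aemeasurable_of_map_eq hX))
    ((hX' ▸ hψ).comp_of_map (aemeasurable_of_map_eq hX'))

variable [IsFiniteMeasure P]

theorem covariance_sum_comp_of_iIndepFun {κ : Type*} [Fintype κ] {T : κ → ι}
    (hT : Function.Injective T) (hind : iIndepFun S P) (hlaw : ∀ i, P.map (S i) = p)
    (hφ : MemLp φ 2 p) (hψ : MemLp ψ 2 p) :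
    covariance (fun ω => ∑ k, φ (S (T k) ω)) (fun ω => ∑ k, ψ (S (T k) ω)) P
      = Fintype.card κ * covariance φ ψ p := by
  have hrow : ∀ k, ∑ k', covariance (fun ω => φ (S (T k) ω)) (fun ω => ψ (S (T k') ω)) P
      = covariance φ ψ p := fun k => by
    rw [Finset.sum_eq_single k (fun k' _ hk' => covariance_comp_eq_zero_of_indepFun
        (hind.indepFun (hT.ne (Ne.symm hk'))) (hlaw _) (hlaw _) hφ hψ) (by simp),
      covariance_comp_of_map_eq (hlaw _) hφ.1 hψ.1]
  rw [covariance_fun_sum_fun_sum (fun k => memLp_comp_of_map_eq (hlaw (T k)) hφ)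
    (fun k => memLp_comp_of_map_eq (hlaw (T k)) hψ)]
  simp only [hrow, Finset.sum_const, Finset.card_univ, nsmul_eq_mul]

theorem covariance_sampleMean_of_iIndepFun {N : ℕ} {T : Fin N → ι}
    (hT : Function.Injective T) (hind : iIndepFun S P) (hlaw : ∀ i, P.map (S i) = p)
    (hφ : MemLp φ 2 p) (hψ : MemLp ψ 2 p) :
    covariance (fun ω => (N : ℝ)⁻¹ * ∑ k, φ (S (T k) ω))
      (fun ω => (N : ℝ)⁻¹ * ∑ k, ψ (S (T k) ω)) P = (N : ℝ)⁻¹ * covariance φ ψ p := by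
  rw [covariance_const_mul_left, covariance_const_mul_right,
    covariance_sum_comp_of_iIndepFun hT hind hlaw hφ hψ, Fintype.card_fin]
  rcases eq_or_ne (N : ℝ) 0 with hN | hN
  · simp [hN]
  · field_simp

theorem variance_sampleMean_of_iIndepFun {N : ℕ} {T : Fin N → ι}
    (hT : Function.Injective T) (hind : iIndepFun S P) (hlaw : ∀ i, P.map (S i) = p)
    (hφ : MemLp φ 2 p) :
    variance (fun ω => (N : ℝ)⁻¹ * ∑ k, φ (S (T k) ω)) P = (N : ℝ)⁻¹ * variance φ p := by
  rw [← covariance_self (memLp_sampleMean hlaw hφ T).aemeasurable,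
    covariance_sampleMean_of_iIndepFun hT hind hlaw hφ hφ, covariance_self hφ.aemeasurable]

end SampleMean

/-- first part: if `W` is independent of the pair `(X, Y)` and
`Var(Y) + Var(W) > 0`, then `λ̃* = Cov(X,Y)/(Var(Y)+Var(W))` is the unique minimizer of
`λ ↦ Var(X − λ(Y − W))`; (second part, "in particular") when `X, Y, W` are the Monte Carlo
averages `X = (1/M)∑ f(Z_k)`, `Y = (1/M)∑ g(Z_k)`, `W = (1/M_E)∑ g(Z'_j)` over i.i.d.
`p`-distributed samples (the two batches independent), the optimal coefficient equals
`(M_E/(M+M_E))·Cov_p(f,g)/Var_p(g)`. -/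
theorem stmt6 {Ω : Type*} [MeasurableSpace Ω] (P : Measure Ω) [IsProbabilityMeasure P]
    (X Y W : Ω → ℝ)
    (hX : MemLp X 2 P) (hY : MemLp Y 2 P) (hW : MemLp W 2 P)
    (hindep : IndepFun (fun ω => (X ω, Y ω)) W P)
    (hpos : 0 < variance Y P + variance W P)
    (lamStar : ℝ) (hlam : lamStar = cov P X Y / (variance Y P + variance W P))
    (V : ℝ → ℝ) (hV : ∀ l : ℝ, V l = variance (fun ω => X ω - l * (Y ω - W ω)) P) :
    (∀ l : ℝ, l ≠ lamStar → V lamStar < V l) ∧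
    (∀ (Z : Type) (_ : MeasurableSpace Z) (p : Measure Z), IsProbabilityMeasure p →
      ∀ (f g : Z → ℝ), MemLp f 2 p → MemLp g 2 p → 0 < variance g p →
      ∀ (M ME : ℕ), 0 < M → 0 < ME →
      ∀ S : Fin M ⊕ Fin ME → Ω → Z,
        iIndepFun (m := fun _ : Fin M ⊕ Fin ME => (inferInstance : MeasurableSpace Z)) S P →
        (∀ i, Measure.map (S i) P = p) →
        X = (fun ω => (M : ℝ)⁻¹ * ∑ k : Fin M, f (S (Sum.inl k) ω)) →
        Y = (fun ω => (M : ℝ)⁻¹ * ∑ k : Fin M, g (S (Sum.inl k) ω)) →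
        W = (fun ω => (ME : ℝ)⁻¹ * ∑ j : Fin ME, g (S (Sum.inr j) ω)) →
        lamStar = (ME / (M + ME) : ℝ) * (cov p f g / variance g p)) := by
  subst hlam
  refine ⟨fun l hl => ?_, ?_⟩
  · rw [hV, hV, cov_eq_covariance]
    exact variance_control_variate_lt hX hY hW hindep hpos (cov_eq_covariance P X Y ▸ hl)
  · intro Z _ p _ f g hf hg _ M ME hM hME S hind hlaw hXf hYg hWg
    subst hXf hYg hWg
    rw [cov_eq_covariance, cov_eq_covariance,
      covariance_sampleMean_of_iIndepFun Sum.inl_injective hind hlaw hf hg,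
      variance_sampleMean_of_iIndepFun Sum.inl_injective hind hlaw hg,
      variance_sampleMean_of_iIndepFun Sum.inr_injective hind hlaw hg]
    have hM' : (M : ℝ) ≠ 0 := Nat.cast_ne_zero.2 hM.ne'
    have hME' : (ME : ℝ) ≠ 0 := Nat.cast_ne_zero.2 hME.ne'
    field_simp
    ring
end

section
/- In the setting of the hierarchical multilevel control-variate estimator E^Λ_L = λ_1 E_{M_0}[f_1] + ∑_{h=1}^{L} (λ_{h+1} E_{M_h}[f_{h+1}] − λ_h E_{M_h}[f_h]) with λ_{L+1} = 1, built from mutually independent i.i.d. p-distributed batches of sizes M_0, …, M_L, assume Var_p(f_h) > 0 for h = 1, …, L. Then the map Λ ↦ Var(E^Λ_L) is a strictly convex quadratic on ℝ^L, it has a unique minimizer Λ* = (λ*_1,…,λ*_L), and Λ* is characterized as the unique solution of the tridiagonal linear system: for h = 1, …, L, λ_h Var_p(f_h) − λ_{h−1} (M_h/(M_{h−1}+M_h)) Cov_p(f_h, f_{h−1}) − λ_{h+1} (M_{h−1}/(M_{h−1}+M_h)) Cov_p(f_{h+1}, f_h) = 0, with the conventions λ_0 = 0 and λ_{L+1} =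 1. -/
open MeasureTheory ProbabilityTheory

/-- Covariance under `p` of two square-integrable functions of a `p`-distributed variable. -/
noncomputable def covP {Z : Type*} [MeasurableSpace Z] (p : Measure Z) (f g : Z → ℝ) : ℝ :=
  ∫ z, (f z - ∫ z', f z' ∂p) * (g z - ∫ z', g z' ∂p) ∂p

/-- Extension of a coefficient vector `Λ = (λ_1, …, λ_L)` to `ℕ`, with the conventions
`λ_0 = 0` and `λ_{L+1} = 1`. -/
def lamExt (L : ℕ) (Λ : Fin L → ℝ) : ℕ → ℝ := fun h =>
  if h0 : h = 0 then 0
  else if hL : h ≤ L then Λ ⟨h - 1, by omega⟩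
  else if h = L + 1 then 1 else 0

/-- The tridiagonal optimality system for the hierarchical control-variate coefficients:
for `h = 1, …, L`,
`λ_h Var_p(f_h) − λ_{h−1} (M_h/(M_{h−1}+M_h)) Cov_p(f_h, f_{h−1})
  − λ_{h+1} (M_{h−1}/(M_{h−1}+M_h)) Cov_p(f_{h+1}, f_h) = 0`,
with `λ_0 = 0` and `λ_{L+1} = 1`. -/
def TridiagSystem {Z : Type*} [MeasurableSpace Z] (p : Measure Z)
    (L : ℕ) (f : ℕ → Z → ℝ) (M : ℕ → ℕ) (Λ : Fin L → ℝ) : Prop :=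
  ∀ h, 1 ≤ h → h ≤ L →
    lamExt L Λ h * variance (f h) p
      - lamExt L Λ (h - 1) * ((M h : ℝ) / ((M (h - 1) : ℝ) + (M h : ℝ))) * covP p (f h) (f (h - 1))
      - lamExt L Λ (h + 1) * ((M (h - 1) : ℝ) / ((M (h - 1) : ℝ) + (M h : ℝ)))
          * covP p (f (h + 1)) (f h) = 0

open Finset

/-! The estimator is a sum of independent batch means, so its variance is the quadratic form
`Q(λ) = ∑_{h=0}^{L} M_h⁻¹ Var_p(λ_{h+1} f_{h+1} − λ_h f_h)` in the extended coefficient vector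
`λ = (0, λ_1, …, λ_L, 1)`. As `Λ` ranges over `ℝ^L`, `λ` ranges over an affine subspace, and `Q`
is positive definite along its direction: if `λ_h` is the first nonzero coordinate, the
`(h-1)`-st summand is `M_{h-1}⁻¹ λ_h² Var_p(f_h) > 0`. A quadratic function that is positive
definite on an affine space is strictly convex, its strict minimizers are exactly its critical
points, and in finite dimension a critical point exists. Testing the gradient against the
coordinate direction `e_h` gives `M_{h-1}⁻¹ + M_h⁻¹` times the `h`-th equation of the tridiagonal
system. -/

section AffineQuadratic

variable {E F : Type*} [AddCommGroup E] [Module ℝ E] [AddCommGroup F] [Module ℝ F]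
  {B : LinearMap.BilinForm ℝ F} {A : E →ₗ[ℝ] F}

lemma strictConvexOn_bilinForm_comp_affine (hpos : ∀ x ≠ 0, 0 < B (A x) (A x)) (a : F) :
    StrictConvexOn ℝ Set.univ fun x => B (a + A x) (a + A x) := by
  refine ⟨convex_univ, fun x _ y _ hxy s t hs ht hst => ?_⟩
  obtain rfl : t = 1 - s := by linarith
  have key : s * B (a + A x) (a + A x) + (1 - s) * B (a + A y) (a + A y)
      - B (a + A (s • x + (1 - s) • y)) (a + A (s • x + (1 - s) • y))
      = s * (1 - s) * B (A (x - y)) (A (x - y)) := by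
    simp only [map_add, map_sub, map_smul, LinearMap.add_apply, LinearMap.sub_apply,
      LinearMap.smul_apply, smul_eq_mul]
    ring
  have := mul_pos (mul_pos hs ht) (hpos _ (sub_ne_zero.mpr hxy))
  simp only [smul_eq_mul]
  linarith

lemma bilinForm_comp_affine_add (hB : B.IsSymm) (a : F) (x y : E) :
    B (a + A (x + y)) (a + A (x + y))
      = B (a + A x) (a + A x) + 2 * B (a + A x) (A y) + B (A y) (A y) := by
  have := hB.eq (A y) (a + A x)
  simp only [map_add, LinearMap.add_apply] at this ⊢
  linarith

lemma forall_lt_bilinForm_comp_affine_iff (hB : B.IsSymm) (hpos : ∀ x ≠ 0, 0 < B (A x) (A x))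
    (a : F) (x : E) :
    (∀ y ≠ x, B (a + A x) (a + A x) < B (a + A y) (a + A y)) ↔ ∀ y, B (a + A x) (A y) = 0 := by
  constructor
  · intro hmin y
    rcases eq_or_ne y 0 with rfl | hy
    · simp
    set g := B (a + A x) (A y)
    set q := B (A y) (A y)
    have hq : 0 < q := hpos y hy
    by_contra hg
    have hne : x + (-g / q) • y ≠ x := by
      simpa using smul_ne_zero (div_ne_zero (neg_ne_zero.mpr hg) hq.ne') hy
    -- moving by `-g / q` along `y` changes the value by `-g ^ 2 / q`
    have hlt := hmin _ hne
    simp only [bilinForm_comp_affine_add hB, map_smul, LinearMap.smul_apply, smul_eq_mul] at hlt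
    have : (-g / q) * g * 2 + (-g / q) * ((-g / q) * q) = -(g ^ 2 / q) := by
      field_simp; ring
    have : 0 ≤ g ^ 2 / q := by positivity
    linarith
  · intro hcrit y hy
    have := bilinForm_comp_affine_add (A := A) hB a x (y - x)
    rw [add_sub_cancel, hcrit] at this
    linarith [hpos _ (sub_ne_zero.mpr hy)]

lemma exists_forall_bilinForm_comp_affine_eq_zero [FiniteDimensional ℝ E]
    (hpos : ∀ x ≠ 0, 0 < B (A x) (A x)) (a : F) : ∃ x, ∀ y, B (a + A x) (A y) = 0 := by
  set B' : LinearMap.BilinForm ℝ E := B.compl₁₂ A A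
  have hnd : B'.Nondegenerate :=
    ⟨fun x hx => by_contra fun h => (hpos x h).ne' (hx x),
      fun y hy => by_contra fun h => (hpos y h).ne' (hy y)⟩
  refine ⟨(B'.toDual hnd).symm (-(B a ∘ₗ A)), fun y => ?_⟩
  have := LinearMap.BilinForm.apply_toDual_symm_apply (hB := hnd) (-(B a ∘ₗ A)) y
  simp only [B', LinearMap.compl₁₂_apply, LinearMap.neg_apply, LinearMap.comp_apply] at this
  rw [map_add, LinearMap.add_apply, this, add_neg_cancel]

end AffineQuadratic

lemma ProbabilityTheory.iIndepFun.variance_fun_sum_comp {Ω Z ι : Type*} [MeasurableSpace Ω]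
    [MeasurableSpace Z] [Fintype ι] {P : Measure Ω} {p : Measure Z} [IsProbabilityMeasure p]
    {S : ι → Ω → Z}
    (hS : iIndepFun S P) (hlaw : ∀ i, P.map (S i) = p) {g : ι → Z → ℝ}
    (hg : ∀ i, MemLp (g i) 2 p) :
    Var[fun ω => ∑ i, g i (S i ω); P] = ∑ i, Var[g i; p] := by
  have hSm : ∀ i, AEMeasurable (S i) P := fun i =>
    AEMeasurable.of_map_ne_zero (by rw [hlaw i]; exact IsProbabilityMeasure.ne_zero p)
  have hgm : ∀ i, AEMeasurable (g i) (P.map (S i)) := fun i => hlaw i ▸ (hg i).aemeasurable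
  have hindep := hS.comp₀ g hSm hgm
  have hsum := IndepFun.variance_sum (s := univ) (X := fun i => g i ∘ S i)
    (fun i _ => (hlaw i ▸ hg i : MemLp (g i) 2 (P.map (S i))).comp_of_map (hSm i))
    (fun i _ j _ hij => hindep.indepFun hij)
  simp only [sum_fn, Function.comp_apply] at hsum
  refine hsum.trans (sum_congr rfl fun i _ => ?_)
  rw [← variance_map (hgm i) (hSm i), hlaw i]

lemma covP_eq_covariance {Z : Type*} [MeasurableSpace Z] (p : Measure Z) (f g : Z → ℝ) :
    covP p f g = cov[f, g; p] := rfl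

lemma variance_mul_sub_mul {Z : Type*} [MeasurableSpace Z] {p : Measure Z} [IsFiniteMeasure p]
    {f g : Z → ℝ} (hf : MemLp f 2 p) (hg : MemLp g 2 p) (a b : ℝ) :
    Var[fun z => a * f z - b * g z; p]
      = a * a * Var[f; p] + b * b * Var[g; p] - (a * b + b * a) * covP p f g := by
  rw [variance_fun_sub (hf.const_mul a) (hg.const_mul b), variance_const_mul, variance_const_mul,
    covP_eq_covariance, covariance_const_mul_left, covariance_const_mul_right]
  ring

def chainForm (L : ℕ) (m v c : ℕ → ℝ) : LinearMap.BilinForm ℝ (ℕ → ℝ) :=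
  LinearMap.mk₂ ℝ
    (fun μ ν => ∑ h ∈ range (L + 1), m h * (μ (h + 1) * ν (h + 1) * v (h + 1) + μ h * ν h * v h
      - (μ (h + 1) * ν h + μ h * ν (h + 1)) * c h))
    (fun _ _ _ => by simp only [Pi.add_apply, ← sum_add_distrib]; congr! 1; ring)
    (fun _ _ _ => by simp only [Pi.smul_apply, smul_eq_mul, mul_sum]; congr! 1; ring)
    (fun _ _ _ => by simp only [Pi.add_apply, ← sum_add_distrib]; congr! 1; ring)
    (fun _ _ _ => by simp only [Pi.smul_apply, smul_eq_mul, mul_sum]; congr! 1; ring)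

section chainForm

variable {L : ℕ} {m v c : ℕ → ℝ}

lemma chainForm_apply (μ ν : ℕ → ℝ) :
    chainForm L m v c μ ν = ∑ h ∈ range (L + 1), m h * (μ (h + 1) * ν (h + 1) * v (h + 1)
      + μ h * ν h * v h - (μ (h + 1) * ν h + μ h * ν (h + 1)) * c h) := rfl

lemma chainForm_isSymm : (chainForm L m v c).IsSymm :=
  ⟨fun μ ν => by simp only [chainForm_apply]; congr! 1; ring⟩

lemma chainForm_apply_single (μ : ℕ → ℝ) {j : ℕ} (hj : j + 1 ≤ L) :
    chainForm L m v c μ (Pi.single (j + 1) 1)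
      = m j * (μ (j + 1) * v (j + 1) - μ j * c j)
        + m (j + 1) * (μ (j + 1) * v (j + 1) - μ (j + 2) * c (j + 1)) := by
  rw [chainForm_apply, sum_eq_add j (j + 1) (by omega)]
  · simp
  · intro h _ hh
    simp [hh.1, hh.2]
  · simp; omega
  · simp; omega

end chainForm

section ChainFormVariance

variable {Z : Type*} [MeasurableSpace Z] {p : Measure Z} {L : ℕ} {f : ℕ → Z → ℝ}

lemma chainForm_self_eq_sum_variance [IsFiniteMeasure p]
    (hf : ∀ h, 1 ≤ h → h ≤ L + 1 → MemLp (f h) 2 p) (m : ℕ → ℝ) {μ : ℕ → ℝ} (hμ : μ 0 = 0) :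
    chainForm L m (fun h => Var[f h; p]) (fun h => covP p (f (h + 1)) (f h)) μ μ
      = ∑ h ∈ range (L + 1), m h * Var[fun z => μ (h + 1) * f (h + 1) z - μ h * f h z; p] := by
  refine (chainForm_apply μ μ).trans (sum_congr rfl fun h hh => ?_)
  rcases h with _ | h
  · simp only [hμ, zero_mul, mul_zero, sub_zero, add_zero, variance_const_mul]
    ring
  · rw [mem_range] at hh
    rw [variance_mul_sub_mul (hf _ (by omega) (by omega)) (hf _ (by omega) (by omega))]

lemma chainForm_self_pos [IsFiniteMeasure p] (hf : ∀ h, 1 ≤ h → h ≤ L + 1 → MemLp (f h) 2 p)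
    (hvar : ∀ h, 1 ≤ h → h ≤ L → 0 < Var[f h; p]) {m : ℕ → ℝ} (hm : ∀ h ≤ L, 0 < m h)
    {μ : ℕ → ℝ} (hμ0 : μ 0 = 0) (hμ : ∃ n, n ≤ L ∧ μ n ≠ 0) :
    0 < chainForm L m (fun h => Var[f h; p]) (fun h => covP p (f (h + 1)) (f h)) μ μ := by
  classical
  rw [chainForm_self_eq_sum_variance hf m hμ0]
  obtain ⟨hnL, hn⟩ := Nat.find_spec hμ
  obtain ⟨k, hk⟩ : ∃ k, Nat.find hμ = k + 1 :=
    Nat.exists_eq_add_one_of_ne_zero fun h => hn (by rw [h, hμ0])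
  have hμk : μ k = 0 := by
    by_contra h
    exact Nat.find_min hμ (by omega) ⟨by omega, h⟩
  rw [hk] at hnL hn
  refine sum_pos' (fun h hh => mul_nonneg (hm h (by simp at hh; omega)).le (variance_nonneg _ _))
    ⟨k, by simp; omega, ?_⟩
  simp only [hμk, zero_mul, sub_zero, variance_const_mul]
  exact mul_pos (hm k (by omega)) (mul_pos (by positivity) (hvar _ (by omega) hnL))

end ChainFormVariance

noncomputable def estimatorForm {Z : Type*} [MeasurableSpace Z] (p : Measure Z) (L : ℕ)
    (f : ℕ → Z → ℝ) (M : ℕ → ℕ) : LinearMap.BilinForm ℝ (ℕ → ℝ) :=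
  chainForm L (fun h => (M h : ℝ)⁻¹) (fun h => Var[f h; p]) (fun h => covP p (f (h + 1)) (f h))

lemma estimatorForm_isSymm {Z : Type*} [MeasurableSpace Z] {p : Measure Z} {L : ℕ}
    {f : ℕ → Z → ℝ} {M : ℕ → ℕ} : (estimatorForm p L f M).IsSymm :=
  chainForm_isSymm

lemma estimator_eq_sum_batches {Ω Z : Type*} (L : ℕ) (f : ℕ → Z → ℝ) (M : ℕ → ℕ)
    (S : ℕ → ℕ → Ω → Z) {μ : ℕ → ℝ} (hμ : μ 0 = 0) (ω : Ω) :
    μ 1 * ((M 0 : ℝ)⁻¹ * ∑ k ∈ range (M 0), f 1 (S 0 k ω))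
        + ∑ h ∈ Icc 1 L,
            (μ (h + 1) * ((M h : ℝ)⁻¹ * ∑ k ∈ range (M h), f (h + 1) (S h k ω))
              - μ h * ((M h : ℝ)⁻¹ * ∑ k ∈ range (M h), f h (S h k ω)))
      = ∑ q : Σ h : Fin (L + 1), Fin (M h),
          (M q.1 : ℝ)⁻¹
            * (μ (q.1 + 1) * f (q.1 + 1) (S q.1 q.2 ω) - μ q.1 * f q.1 (S q.1 q.2 ω)) := by
  have hrange : range (L + 1) = insert 0 (Icc 1 L) := by ext; simp; omega
  calc _ = ∑ h ∈ range (L + 1), ∑ k ∈ range (M h),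
        (M h : ℝ)⁻¹ * (μ (h + 1) * f (h + 1) (S h k ω) - μ h * f h (S h k ω)) := by
        rw [hrange, sum_insert (by simp)]
        congr 1
        · simp only [hμ, zero_add, zero_mul, sub_zero, mul_sum]
          exact sum_congr rfl fun _ _ => by ring
        · refine sum_congr rfl fun h _ => ?_
          simp only [mul_sum, ← sum_sub_distrib]
          exact sum_congr rfl fun _ _ => by ring
    _ = _ := by
        simp only [Fintype.sum_sigma]
        rw [← Fin.sum_univ_eq_sum_range (fun h => ∑ k ∈ range (M h), _)]
        refine sum_congr rfl fun h _ => ?_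
        rw [← Fin.sum_univ_eq_sum_range]

lemma variance_estimator_eq_estimatorForm {Ω Z : Type*} [MeasurableSpace Ω] [MeasurableSpace Z]
    {P : Measure Ω} {p : Measure Z} [IsProbabilityMeasure p] {L : ℕ} {f : ℕ → Z → ℝ}
    (hf : ∀ h, 1 ≤ h → h ≤ L + 1 → MemLp (f h) 2 p) {M : ℕ → ℕ} (hM : ∀ h, h ≤ L → 0 < M h)
    {S : ℕ → ℕ → Ω → Z} (hindep : iIndepFun (fun q : Σ h : Fin (L + 1), Fin (M h) => S q.1 q.2) P)
    (hlaw : ∀ h, h ≤ L → ∀ k, k < M h → Measure.map (S h k) P = p) {μ : ℕ → ℝ} (hμ : μ 0 = 0) :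
    Var[fun ω => μ 1 * ((M 0 : ℝ)⁻¹ * ∑ k ∈ range (M 0), f 1 (S 0 k ω))
        + ∑ h ∈ Icc 1 L,
            (μ (h + 1) * ((M h : ℝ)⁻¹ * ∑ k ∈ range (M h), f (h + 1) (S h k ω))
              - μ h * ((M h : ℝ)⁻¹ * ∑ k ∈ range (M h), f h (S h k ω))); P]
      = estimatorForm p L f M μ μ := by
  set g : ℕ → Z → ℝ := fun h z => μ (h + 1) * f (h + 1) z - μ h * f h z
  have hg : ∀ h ≤ L, MemLp (g h) 2 p := by
    rintro (_ | h) hh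
    · simpa [g, hμ] using (hf 1 le_rfl (by omega)).const_mul (μ 1)
    · exact ((hf _ (by omega) (by omega)).const_mul _).sub
        ((hf _ (by omega) (by omega)).const_mul _)
  simp only [estimator_eq_sum_batches L f M S hμ]
  rw [hindep.variance_fun_sum_comp (g := fun q z => (M q.1 : ℝ)⁻¹ * g q.1 z)
      (fun q => hlaw _ (by omega) _ q.2.isLt) (fun q => (hg _ (by omega)).const_mul _),
    estimatorForm, chainForm_self_eq_sum_variance hf _ hμ]
  simp only [variance_const_mul, Fintype.sum_sigma, sum_const, card_univ, Fintype.card_fin,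
    nsmul_eq_mul]
  rw [Fin.sum_univ_eq_sum_range (fun h => (M h : ℝ) * (((M h : ℝ)⁻¹) ^ 2 * Var[g h; p]))]
  refine sum_congr rfl fun h hh => ?_
  have : (M h : ℝ) ≠ 0 := by exact_mod_cast (hM h (by simp at hh; omega)).ne'
  rw [inv_pow, ← mul_assoc, ← div_eq_mul_inv, sq, div_mul_cancel_left₀ this]

def lamExtLin (L : ℕ) : (Fin L → ℝ) →ₗ[ℝ] ℕ → ℝ where
  toFun Λ := lamExt L Λ - lamExt L 0
  map_add' x y := by
    ext n
    simp only [lamExt, Pi.sub_apply, Pi.add_apply, Pi.zero_apply]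
    split_ifs <;> ring
  map_smul' a x := by
    ext n
    simp only [lamExt, Pi.sub_apply, Pi.smul_apply, Pi.zero_apply, smul_eq_mul, RingHom.id_apply]
    split_ifs <;> ring

section lamExt

variable {L : ℕ}

lemma lamExt_apply_zero (Λ : Fin L → ℝ) : lamExt L Λ 0 = 0 := rfl

lemma lamExt_eq_add (Λ : Fin L → ℝ) : lamExt L Λ = lamExt L 0 + lamExtLin L Λ := by
  simp [lamExtLin]

lemma lamExtLin_apply_zero (Δ : Fin L → ℝ) : lamExtLin L Δ 0 = 0 := by
  simp [lamExtLin, lamExt_apply_zero]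

lemma lamExtLin_apply_succ (Δ : Fin L → ℝ) (j : Fin L) : lamExtLin L Δ (j + 1) = Δ j := by
  simp [lamExtLin, lamExt, Nat.succ_le_of_lt j.isLt]

lemma lamExtLin_single (j : Fin L) : lamExtLin L (Pi.single j 1) = Pi.single (j + 1 : ℕ) 1 := by
  ext n
  rcases n with _ | n
  · simp [lamExtLin_apply_zero]
  · by_cases hn : n < L
    · simpa [Pi.single_apply, Fin.ext_iff] using lamExtLin_apply_succ (Pi.single j 1) ⟨n, hn⟩
    · simp [lamExtLin, lamExt, hn, (show n ≠ j by omega)]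

end lamExt

section EstimatorForm

variable {Z : Type*} [MeasurableSpace Z] {p : Measure Z} {L : ℕ} {f : ℕ → Z → ℝ} {M : ℕ → ℕ}

lemma estimatorForm_lamExtLin_pos [IsFiniteMeasure p]
    (hf : ∀ h, 1 ≤ h → h ≤ L + 1 → MemLp (f h) 2 p)
    (hvar : ∀ h, 1 ≤ h → h ≤ L → 0 < Var[f h; p]) (hM : ∀ h, h ≤ L → 0 < M h)
    {Δ : Fin L → ℝ} (hΔ : Δ ≠ 0) :
    0 < estimatorForm p L f M (lamExtLin L Δ) (lamExtLin L Δ) := by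
  obtain ⟨j, hj⟩ := Function.ne_iff.mp hΔ
  exact chainForm_self_pos hf hvar (fun h hh => inv_pos.2 (by exact_mod_cast hM h hh))
    (lamExtLin_apply_zero Δ) ⟨j + 1, j.isLt, by rwa [lamExtLin_apply_succ]⟩

lemma estimatorForm_apply_single (hM : ∀ h, h ≤ L → 0 < M h) (μ : ℕ → ℝ) {j : ℕ}
    (hj : j + 1 ≤ L) :
    estimatorForm p L f M μ (Pi.single (j + 1) 1)
      = ((M j : ℝ)⁻¹ + (M (j + 1) : ℝ)⁻¹)
        * (μ (j + 1) * Var[f (j + 1); p]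
          - μ j * ((M (j + 1) : ℝ) / ((M j : ℝ) + (M (j + 1) : ℝ))) * covP p (f (j + 1)) (f j)
          - μ (j + 2) * ((M j : ℝ) / ((M j : ℝ) + (M (j + 1) : ℝ)))
              * covP p (f (j + 2)) (f (j + 1))) := by
  have h0 : (M j : ℝ) ≠ 0 := by exact_mod_cast (hM j (by omega)).ne'
  have h1 : (M (j + 1) : ℝ) ≠ 0 := by exact_mod_cast (hM (j + 1) hj).ne'
  rw [estimatorForm, chainForm_apply_single μ hj]
  field_simp
  ring

lemma tridiagSystem_iff_forall_estimatorForm_eq_zero (hM : ∀ h, h ≤ L → 0 < M h)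
    (Λ : Fin L → ℝ) :
    TridiagSystem p L f M Λ ↔ ∀ Δ, estimatorForm p L f M (lamExt L Λ) (lamExtLin L Δ) = 0 := by
  have hbasis : (∀ Δ, estimatorForm p L f M (lamExt L Λ) (lamExtLin L Δ) = 0)
      ↔ ∀ j : Fin L, estimatorForm p L f M (lamExt L Λ) (Pi.single (j + 1 : ℕ) 1) = 0 := by
    refine ⟨fun H j => by simpa [lamExtLin_single] using H (Pi.single j 1), fun H => ?_⟩
    have : estimatorForm p L f M (lamExt L Λ) ∘ₗ lamExtLin L = 0 :=
      (Pi.basisFun ℝ (Fin L)).ext fun j => by simpa [lamExtLin_single] using H j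
    exact fun Δ => LinearMap.congr_fun this Δ
  rw [hbasis]
  constructor
  · intro H j
    rw [estimatorForm_apply_single hM _ j.isLt]
    simpa using mul_eq_zero_of_right _ (H (j + 1) (by omega) j.isLt)
  · intro H h h1 h2
    obtain ⟨j, rfl⟩ := Nat.exists_eq_add_of_le' h1
    have := H ⟨j, h2⟩
    rw [estimatorForm_apply_single hM _ h2] at this
    have hpos : (0 : ℝ) < (M j : ℝ)⁻¹ + (M (j + 1) : ℝ)⁻¹ := by
      have := hM j (by omega); have := hM (j + 1) h2; positivity
    simpa using (mul_eq_zero.1 this).resolve_left hpos.ne'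

end EstimatorForm

theorem stmt8_general {Ω : Type*} [MeasurableSpace Ω] (P : Measure Ω)
    {Z : Type*} [MeasurableSpace Z] (p : Measure Z) [IsProbabilityMeasure p]
    (L : ℕ) (f : ℕ → Z → ℝ)
    (hf : ∀ h, 1 ≤ h → h ≤ L + 1 → MemLp (f h) 2 p)
    (hvar : ∀ h, 1 ≤ h → h ≤ L → 0 < variance (f h) p)
    (M : ℕ → ℕ) (hM : ∀ h, h ≤ L → 0 < M h)
    (S : ℕ → ℕ → Ω → Z)
    (hindep : iIndepFun
      (fun q : Σ h : Fin (L + 1), Fin (M h) => S q.1 q.2) P)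
    (hlaw : ∀ h, h ≤ L → ∀ k, k < M h → Measure.map (S h k) P = p)
    (V : (Fin L → ℝ) → ℝ)
    (hV : ∀ Λ : Fin L → ℝ, V Λ = variance (fun ω =>
      lamExt L Λ 1 * ((M 0 : ℝ)⁻¹ * ∑ k ∈ Finset.range (M 0), f 1 (S 0 k ω))
        + ∑ h ∈ Finset.Icc 1 L,
            (lamExt L Λ (h + 1) * ((M h : ℝ)⁻¹ * ∑ k ∈ Finset.range (M h), f (h + 1) (S h k ω))
              - lamExt L Λ h * ((M h : ℝ)⁻¹ * ∑ k ∈ Finset.range (M h), f h (S h k ω)))) P) :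
    StrictConvexOn ℝ Set.univ V ∧
    (∃! Λstar : Fin L → ℝ, TridiagSystem p L f M Λstar) ∧
    (∀ Λstar : Fin L → ℝ,
      TridiagSystem p L f M Λstar ↔ (∀ Λ : Fin L → ℝ, Λ ≠ Λstar → V Λstar < V Λ)) := by
  set B := estimatorForm p L f M
  have hVB : V = fun Λ => B (lamExt L 0 + lamExtLin L Λ) (lamExt L 0 + lamExtLin L Λ) :=
    funext fun Λ => by
      rw [hV, variance_estimator_eq_estimatorForm hf hM hindep hlaw (lamExt_apply_zero Λ),
        ← lamExt_eq_add]
  have hpos : ∀ Δ ≠ 0, 0 < B (lamExtLin L Δ) (lamExtLin L Δ) :=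
    fun _ => estimatorForm_lamExtLin_pos hf hvar hM
  have htri : ∀ Λ, TridiagSystem p L f M Λ
      ↔ ∀ Δ, B (lamExt L 0 + lamExtLin L Λ) (lamExtLin L Δ) = 0 := fun Λ => by
    rw [← lamExt_eq_add]; exact tridiagSystem_iff_forall_estimatorForm_eq_zero hM Λ
  have hchar : ∀ Λstar, TridiagSystem p L f M Λstar ↔ ∀ Λ, Λ ≠ Λstar → V Λstar < V Λ :=
    fun Λstar => by
      rw [htri, hVB, forall_lt_bilinForm_comp_affine_iff estimatorForm_isSymm hpos]
  obtain ⟨Λ₀, hΛ₀⟩ := exists_forall_bilinForm_comp_affine_eq_zero hpos (lamExt L 0)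
  refine ⟨hVB ▸ strictConvexOn_bilinForm_comp_affine hpos _,
    ⟨Λ₀, (htri Λ₀).2 hΛ₀, fun Λ hΛ => ?_⟩, hchar⟩
  by_contra hne
  exact lt_asymm ((hchar Λ).1 hΛ Λ₀ (Ne.symm hne)) ((hchar Λ₀).1 ((htri Λ₀).2 hΛ₀) Λ hne)

/-- if `Var_p(f_h) > 0` for `h = 1, …, L`, the variance of the hierarchical
multilevel control-variate estimator, as a function of `Λ ∈ ℝ^L` (with `λ_{L+1} = 1`), is a
strictly convex quadratic, has a unique minimizer `Λ*`, and `Λ*` is characterized as the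
unique solution of the tridiagonal linear system. -/
theorem stmt8 {Ω : Type*} [MeasurableSpace Ω] (P : Measure Ω) [IsProbabilityMeasure P]
    {Z : Type*} [MeasurableSpace Z] (p : Measure Z) [IsProbabilityMeasure p]
    (L : ℕ) (f : ℕ → Z → ℝ)
    (hf : ∀ h, 1 ≤ h → h ≤ L + 1 → MemLp (f h) 2 p)
    (hvar : ∀ h, 1 ≤ h → h ≤ L → 0 < variance (f h) p)
    (M : ℕ → ℕ) (hM : ∀ h, h ≤ L → 0 < M h)
    (S : ℕ → ℕ → Ω → Z)
    (hindep : iIndepFun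
      (fun q : Σ h : Fin (L + 1), Fin (M h) => S q.1 q.2) P)
    (hlaw : ∀ h, h ≤ L → ∀ k, k < M h → Measure.map (S h k) P = p)
    (V : (Fin L → ℝ) → ℝ)
    (hV : ∀ Λ : Fin L → ℝ, V Λ = variance (fun ω =>
      lamExt L Λ 1 * ((M 0 : ℝ)⁻¹ * ∑ k ∈ Finset.range (M 0), f 1 (S 0 k ω))
        + ∑ h ∈ Finset.Icc 1 L,
            (lamExt L Λ (h + 1) * ((M h : ℝ)⁻¹ * ∑ k ∈ Finset.range (M h), f (h + 1) (S h k ω))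
              - lamExt L Λ h * ((M h : ℝ)⁻¹ * ∑ k ∈ Finset.range (M h), f h (S h k ω)))) P) :
    StrictConvexOn ℝ Set.univ V ∧
    (∃! Λstar : Fin L → ℝ, TridiagSystem p L f M Λstar) ∧
    (∀ Λstar : Fin L → ℝ,
      TridiagSystem p L f M Λstar ↔ (∀ Λ : Fin L → ℝ, Λ ≠ Λstar → V Λstar < V Λ)) :=
  stmt8_general P p L f hf hvar M hM S hindep hlaw V hV
end

section
/- In the setting of the hierarchical multilevel control-variate estimator, assume Var_p(f_h) > 0 for h = 1, …, L, and define the quasi-optimal coefficients λ̂*_h = Cov_p(f_{h+1}, f_h)/Var_p(f_h) for h = 1, …, L. Then there exists a constant C ≥ 0, depending only on L, the variances Var_p(f_h) and the covariances Cov_p(f_{h+1}, f_h) (but not on the batch sizes), such that for all positive integers M_0 ≥ M_1 ≥ … ≥ M_L, the unique minimizer Λ* = (λ*_1,…,λ*_L) of the variance of the estimator satisfies, for every h = 1, …, L, |∏_{j=h}^{L} λ̂*_j − λ*_h| ≤ C·μ̄_h, where μ̄_h = max_{h ≤ k ≤ L} M_k/(M_{k−1}+M_k). -/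
/-!
Stationarity of the variance in each coefficient makes `λ*` the solution of a symmetric
tridiagonal system with diagonal `Var(f_k)(1/M_{k-1} + 1/M_k)`, off-diagonal
`u_k = Cov(f_{k+1}, f_k)/M_k` and boundary values `λ*_0 = 0`, `λ*_{L+1} = 1`. Forward
elimination gives `λ*_h = ∏_{j=h}^{L} γ_j` with `γ_j = u_j / π_j`, where by Cauchy–Schwarz the
pivot `π_j` lies between `Var(f_j)/M_j` and the diagonal entry. As `λ̂*_j = u_j M_j / Var(f_j)`,
this yields `|γ_j| ≤ |λ̂*_j|` and `|λ̂*_j - γ_j| ≤ |λ̂*_j| M_j/(M_{j-1}+M_j)`, and comparing the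
two products factor by factor gives the claim.
-/

open MeasureTheory ProbabilityTheory

/-- The variance of the hierarchical multilevel control-variate estimator with coefficients
`lam` (where `lam (L+1) = 1` is intended), batch sizes `M_0, …, M_L` and models
`f_1, …, f_{L+1}`:
`lam₁² M₀⁻¹ Var_p(f₁) + ∑_{h=1}^{L} M_h⁻¹ (lam_{h+1}² Var_p(f_{h+1}) + lam_h² Var_p(f_h)
  − 2 lam_{h+1} lam_h Cov_p(f_{h+1}, f_h))`. -/
noncomputable def hierVar {Z : Type*} [MeasurableSpace Z] (p : Measure Z)
    (L : ℕ) (f : ℕ → Z → ℝ) (M : ℕ → ℕ) (lam : ℕ → ℝ) : ℝ :=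
  (lam 1) ^ 2 * (M 0 : ℝ)⁻¹ * variance (f 1) p
    + ∑ h ∈ Finset.Icc 1 L, (M h : ℝ)⁻¹ *
        ((lam (h + 1)) ^ 2 * variance (f (h + 1)) p
          + (lam h) ^ 2 * variance (f h) p
          - 2 * lam (h + 1) * lam h * covP p (f (h + 1)) (f h))

open Finset

lemma eq_zero_of_forall_nonneg_mul_sq_add_mul {A B : ℝ} (h : ∀ t : ℝ, 0 ≤ A * t ^ 2 + B * t) :
    B = 0 := by
  have hdisc : discrim A B 0 ≤ 0 := discrim_le_zero fun t => by simpa [sq] using h t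
  rw [discrim] at hdisc
  nlinarith [sq_nonneg B]

lemma abs_div_le_abs_div_of_le {u b x : ℝ} (hb : 0 < b) (hbx : b ≤ x) : |u / x| ≤ |u / b| := by
  rw [abs_div, abs_div, abs_of_pos hb, abs_of_pos (hb.trans_le hbx)]
  exact div_le_div_of_nonneg_left (abs_nonneg u) hb hbx

lemma abs_div_sub_div_le {u a b x : ℝ} (hb : 0 < b) (hbx : b ≤ x) (hx : x ≤ a + b) :
    |u / b - u / x| ≤ |u / b| * (a / (a + b)) := by
  have hx0 : 0 < x := hb.trans_le hbx
  have hab : a + b ≠ 0 := (hx0.trans_le hx).ne'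
  have hfac : u / b - u / x = u / b * (1 - b / x) := by field_simp
  have h1 : 0 ≤ 1 - b / x := by rw [sub_nonneg, div_le_one hx0]; exact hbx
  have h2 : 1 - b / x ≤ a / (a + b) := by
    have : b / (a + b) ≤ b / x := div_le_div_of_nonneg_left hb.le hx0 hx
    have e : a / (a + b) = 1 - b / (a + b) := by field_simp [hab]; ring
    linarith
  rw [hfac, abs_mul, abs_of_nonneg h1]
  exact mul_le_mul_of_nonneg_left h2 (abs_nonneg _)

lemma abs_prod_sub_prod_le {ι : Type*} (s : Finset ι) {a b : ι → ℝ} {K : ℝ} (hK : 1 ≤ K)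
    (ha : ∀ i ∈ s, |a i| ≤ K) (hb : ∀ i ∈ s, |b i| ≤ K) :
    |∏ i ∈ s, a i - ∏ i ∈ s, b i| ≤ K ^ #s * ∑ i ∈ s, |a i - b i| := by
  classical
  induction s using Finset.induction_on with
  | empty => simp
  | insert i s hi ih =>
    simp only [mem_insert, forall_eq_or_imp] at ha hb
    have hprod_b : |∏ j ∈ s, b j| ≤ K ^ #s := by
      rw [Finset.abs_prod]
      exact (prod_le_prod (fun _ _ => abs_nonneg _) hb.2).trans_eq (prod_const K)
    have hK0 : 0 ≤ K := zero_le_one.trans hK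
    rw [prod_insert hi, prod_insert hi, sum_insert hi, card_insert_of_notMem hi]
    calc |a i * ∏ j ∈ s, a j - b i * ∏ j ∈ s, b j|
        = |a i * (∏ j ∈ s, a j - ∏ j ∈ s, b j) + (a i - b i) * ∏ j ∈ s, b j| := by
          congr 1; ring
      _ ≤ K * (K ^ #s * ∑ j ∈ s, |a j - b j|) + |a i - b i| * K ^ #s := by
        refine (abs_add_le _ _).trans ?_
        rw [abs_mul, abs_mul]
        gcongr
        exacts [ha.1, ih ha.2 hb.2]
      _ ≤ K ^ (#s + 1) * (|a i - b i| + ∑ j ∈ s, |a j - b j|) := by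
        rw [pow_succ]
        nlinarith [mul_le_mul_of_nonneg_left hK
          (mul_nonneg (abs_nonneg (a i - b i)) (pow_nonneg hK0 #s))]

lemma eq_prod_Icc_mul_of_eq_mul_succ {M : Type*} [CommMonoid M] {x g : ℕ → M} {L : ℕ}
    (hrec : ∀ j, 1 ≤ j → j ≤ L → x j = g j * x (j + 1)) {h : ℕ} (hh : 1 ≤ h) (hhL : h ≤ L + 1) :
    x h = (∏ j ∈ Icc h L, g j) * x (L + 1) := by
  induction hhL using Nat.decreasingInduction with
  | self => simp
  | of_succ k hk ih =>
    rw [hrec k hh (by omega), ih (by omega), ← mul_assoc, ← prod_insert (by simp),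
      insert_Icc_add_one_left_eq_Icc (by omega)]

lemma sum_range_add_single_sub_sum {M : Type*} [AddCommGroup M] (q : ℕ → ℝ → ℝ → M)
    (x : ℕ → ℝ) {i n : ℕ} (hi : i < n) (t : ℝ) :
    ∑ j ∈ range (n + 1),
        q j ((x + Pi.single (i + 1) t : ℕ → ℝ) j) ((x + Pi.single (i + 1) t : ℕ → ℝ) (j + 1))
      - ∑ j ∈ range (n + 1), q j (x j) (x (j + 1))
      = (q i (x i) (x (i + 1) + t) - q i (x i) (x (i + 1)))
        + (q (i + 1) (x (i + 1) + t) (x (i + 2)) - q (i + 1) (x (i + 1)) (x (i + 2))) := by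
  rw [← sum_sub_distrib,
    sum_eq_add_of_mem i (i + 1) (mem_range.2 (by omega)) (mem_range.2 (by omega)) (by omega)]
  · simp
  · intro j _ hj
    simp [hj.1, hj.2]

lemma covariance_sq_le_variance_mul {Ω : Type*} [MeasurableSpace Ω] {μ : Measure Ω}
    [IsFiniteMeasure μ] {X Y : Ω → ℝ} (hX : MemLp X 2 μ) (hY : MemLp Y 2 μ) :
    cov[X, Y; μ] ^ 2 ≤ Var[X; μ] * Var[Y; μ] := by
  have hquad : ∀ t : ℝ, 0 ≤ Var[X; μ] * (t * t) + 2 * cov[X, Y; μ] * t + Var[Y; μ] := by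
    intro t
    have := variance_nonneg (t • X + Y) μ
    rw [variance_add (hX.const_smul t) hY, variance_smul, covariance_smul_left] at this
    linarith
  have := discrim_le_zero hquad
  rw [discrim] at this
  linarith

/-- The pivots of Gaussian elimination, from the top row down, of the symmetric tridiagonal
matrix with diagonal `d 1, d 2, …` and off-diagonal `u 1, u 2, …`. -/
noncomputable def thomasPivot (d u : ℕ → ℝ) : ℕ → ℝ
  | 0 => 0
  | 1 => d 1
  | n + 2 => d (n + 2) - u (n + 1) ^ 2 / thomasPivot d u (n + 1)

lemma thomasPivot_succ (d u : ℕ → ℝ) {k : ℕ} (hk : 1 ≤ k) :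
    thomasPivot d u (k + 1) = d (k + 1) - u k ^ 2 / thomasPivot d u k := by
  obtain ⟨n, rfl⟩ := Nat.exists_eq_add_of_le' hk
  rfl

lemma thomasPivot_bounds {L : ℕ} {a b u : ℕ → ℝ} (ha : ∀ k, 1 ≤ k → k ≤ L → 0 ≤ a k)
    (hb : ∀ k, 1 ≤ k → k ≤ L → 0 < b k) (hu : ∀ k, 1 ≤ k → k < L → u k ^ 2 ≤ b k * a (k + 1))
    (k : ℕ) (hk : 1 ≤ k) (hkL : k ≤ L) :
    b k ≤ thomasPivot (a + b) u k ∧ thomasPivot (a + b) u k ≤ a k + b k := by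
  induction k, hk using Nat.le_induction with
  | base => simpa [thomasPivot] using ha 1 le_rfl hkL
  | succ k hk ih =>
    obtain ⟨ihb, -⟩ := ih (by omega)
    have hbk := hb k hk (by omega)
    have hpiv : 0 < thomasPivot (a + b) u k := hbk.trans_le ihb
    have hle : u k ^ 2 / thomasPivot (a + b) u k ≤ a (k + 1) := by
      rw [div_le_iff₀ hpiv]
      nlinarith [hu k hk hkL, sq_nonneg (u k), ha (k + 1) (by omega) hkL]
    have hnn : 0 ≤ u k ^ 2 / thomasPivot (a + b) u k := by positivity
    rw [thomasPivot_succ _ _ hk, Pi.add_apply]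
    constructor <;> linarith

lemma thomasPivot_mul_eq {L : ℕ} {d u x : ℕ → ℝ} (hx : x 0 = 0)
    (hsys : ∀ i < L, d (i + 1) * x (i + 1) = u (i + 1) * x (i + 2) + u i * x i)
    (hpiv : ∀ k, 1 ≤ k → k ≤ L → thomasPivot d u k ≠ 0) (k : ℕ) (hk : 1 ≤ k) (hkL : k ≤ L) :
    thomasPivot d u k * x k = u k * x (k + 1) := by
  induction k, hk using Nat.le_induction with
  | base => simpa [thomasPivot, hx] using hsys 0 (by omega)
  | succ k hk ih =>
    have ih := ih (by omega)
    have hrow := hsys k (by omega)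
    rw [thomasPivot_succ _ _ hk, sub_mul, div_mul_eq_mul_div, sq, mul_assoc, ← ih, mul_div_assoc,
      mul_div_cancel_left₀ _ (hpiv k hk (by omega))]
    linear_combination hrow

/-- The quasi-optimal coefficient `λ̂*_j`. -/
noncomputable def quasiOptCoeff {Z : Type*} [MeasurableSpace Z] (p : Measure Z) (f : ℕ → Z → ℝ)
    (j : ℕ) : ℝ :=
  covP p (f (j + 1)) (f j) / variance (f j) p

noncomputable def batchRatio (M : ℕ → ℕ) (k : ℕ) : ℝ :=
  (M k : ℝ) / ((M (k - 1) : ℝ) + (M k : ℝ))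

lemma batchRatio_nonneg (M : ℕ → ℕ) (k : ℕ) : 0 ≤ batchRatio M k := by
  unfold batchRatio; positivity

lemma lamExt_zero (L : ℕ) (Λ : Fin L → ℝ) : lamExt L Λ 0 = 0 := by simp [lamExt]

lemma lamExt_succ_self (L : ℕ) (Λ : Fin L → ℝ) : lamExt L Λ (L + 1) = 1 := by simp [lamExt]

lemma lamExt_update_add (L : ℕ) (Λ : Fin L → ℝ) (i : Fin L) (t : ℝ) :
    lamExt L (Function.update Λ i (Λ i + t)) = lamExt L Λ + Pi.single (i.1 + 1) t := by
  ext n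
  simp only [lamExt, Pi.add_apply, Pi.single_apply, Function.update_apply]
  split_ifs <;> simp_all [Fin.ext_iff] <;> omega

lemma hierVar_eq_sum_range {Z : Type*} [MeasurableSpace Z] (p : Measure Z) (L : ℕ)
    (f : ℕ → Z → ℝ) (M : ℕ → ℕ) {lam : ℕ → ℝ} (h0 : lam 0 = 0) :
    hierVar p L f M lam = ∑ j ∈ range (L + 1), (M j : ℝ)⁻¹ *
      (lam (j + 1) ^ 2 * variance (f (j + 1)) p + lam j ^ 2 * variance (f j) p
        - 2 * lam (j + 1) * lam j * covP p (f (j + 1)) (f j)) := by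
  rw [hierVar, sum_range_succ', ← Ico_add_one_right_eq_Icc, sum_Ico_eq_sum_range,
    Nat.add_sub_cancel, h0]
  simp only [add_comm 1]
  ring

lemma hierVar_add_single {Z : Type*} [MeasurableSpace Z] (p : Measure Z) (L : ℕ)
    (f : ℕ → Z → ℝ) (M : ℕ → ℕ) {lam : ℕ → ℝ} (h0 : lam 0 = 0) {i : ℕ} (hi : i < L) (t : ℝ) :
    hierVar p L f M (lam + Pi.single (i + 1) t) = hierVar p L f M lam
      + variance (f (i + 1)) p * ((M i : ℝ)⁻¹ + (M (i + 1) : ℝ)⁻¹) * t ^ 2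
      + 2 * ((variance (f (i + 1)) p * ((M i : ℝ)⁻¹ + (M (i + 1) : ℝ)⁻¹)) * lam (i + 1)
          - (M (i + 1) : ℝ)⁻¹ * covP p (f (i + 2)) (f (i + 1)) * lam (i + 2)
          - (M i : ℝ)⁻¹ * covP p (f (i + 1)) (f i) * lam i) * t := by
  have h0' : (lam + Pi.single (i + 1) t : ℕ → ℝ) 0 = 0 := by simp [h0]
  have hdiff := sum_range_add_single_sub_sum (fun j y z => (M j : ℝ)⁻¹ *
      (z ^ 2 * variance (f (j + 1)) p + y ^ 2 * variance (f j) p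
        - 2 * z * y * covP p (f (j + 1)) (f j))) lam hi t
  rw [hierVar_eq_sum_range p L f M h0, hierVar_eq_sum_range p L f M h0']
  linear_combination hdiff

section Minimizer

variable {Z : Type*} [MeasurableSpace Z] (p : Measure Z) (L : ℕ) (f : ℕ → Z → ℝ) (M : ℕ → ℕ)

lemma hierVar_stationary (Λstar : Fin L → ℝ)
    (hmin : ∀ Λ, hierVar p L f M (lamExt L Λstar) ≤ hierVar p L f M (lamExt L Λ))
    {i : ℕ} (hi : i < L) :
    variance (f (i + 1)) p * ((M i : ℝ)⁻¹ + (M (i + 1) : ℝ)⁻¹) * lamExt L Λstar (i + 1)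
      = (M (i + 1) : ℝ)⁻¹ * covP p (f (i + 2)) (f (i + 1)) * lamExt L Λstar (i + 2)
        + (M i : ℝ)⁻¹ * covP p (f (i + 1)) (f i) * lamExt L Λstar i := by
  set A := variance (f (i + 1)) p * ((M i : ℝ)⁻¹ + (M (i + 1) : ℝ)⁻¹)
  set B := 2 * (A * lamExt L Λstar (i + 1)
    - (M (i + 1) : ℝ)⁻¹ * covP p (f (i + 2)) (f (i + 1)) * lamExt L Λstar (i + 2)
    - (M i : ℝ)⁻¹ * covP p (f (i + 1)) (f i) * lamExt L Λstar i)
  have hB : B = 0 := eq_zero_of_forall_nonneg_mul_sq_add_mul (A := A) fun t => by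
    have := hmin (Function.update Λstar ⟨i, hi⟩ (Λstar ⟨i, hi⟩ + t))
    rw [lamExt_update_add, hierVar_add_single p L f M (lamExt_zero L Λstar) hi t] at this
    linarith
  linarith

variable [IsFiniteMeasure p]

lemma hierVar_minimizer_factorization (hf : ∀ h, 1 ≤ h → h ≤ L → MemLp (f h) 2 p)
    (hvar : ∀ h, 1 ≤ h → h ≤ L → 0 < variance (f h) p) (hM : ∀ h, h ≤ L → 0 < M h)
    (Λstar : Fin L → ℝ)
    (hmin : ∀ Λ, hierVar p L f M (lamExt L Λstar) ≤ hierVar p L f M (lamExt L Λ)) :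
    ∃ γ : ℕ → ℝ, (∀ h, 1 ≤ h → h ≤ L → lamExt L Λstar h = ∏ j ∈ Icc h L, γ j) ∧
      ∀ j ∈ Icc 1 L, |γ j| ≤ |quasiOptCoeff p f j| ∧
        |quasiOptCoeff p f j - γ j| ≤ |quasiOptCoeff p f j| * batchRatio M j := by
  set a : ℕ → ℝ := fun j => variance (f j) p * (M (j - 1) : ℝ)⁻¹
  set b : ℕ → ℝ := fun j => variance (f j) p * (M j : ℝ)⁻¹
  set u : ℕ → ℝ := fun j => (M j : ℝ)⁻¹ * covP p (f (j + 1)) (f j)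
  have hM' : ∀ j, j ≤ L → (0 : ℝ) < M j := fun j hj => Nat.cast_pos.2 (hM j hj)
  have ha : ∀ k, 1 ≤ k → k ≤ L → 0 ≤ a k := fun k hk hkL =>
    mul_nonneg (hvar k hk hkL).le (inv_nonneg.2 (M (k - 1)).cast_nonneg)
  have hb : ∀ k, 1 ≤ k → k ≤ L → 0 < b k := fun k hk hkL =>
    mul_pos (hvar k hk hkL) (inv_pos.2 (hM' k hkL))
  have hu : ∀ k, 1 ≤ k → k < L → u k ^ 2 ≤ b k * a (k + 1) := by
    intro k hk hkL
    have hcs := covariance_sq_le_variance_mul (hf (k + 1) (by omega) hkL) (hf k hk hkL.le)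
    simp only [u, a, b, Nat.add_sub_cancel]
    rw [covP_eq_covariance]
    nlinarith [sq_nonneg (M k : ℝ)⁻¹]
  have hpiv := thomasPivot_bounds ha hb hu
  have hsys : ∀ i < L, (a + b) (i + 1) * lamExt L Λstar (i + 1)
      = u (i + 1) * lamExt L Λstar (i + 2) + u i * lamExt L Λstar i := by
    intro i hi
    simp only [Pi.add_apply, a, b, u, Nat.add_sub_cancel]
    linear_combination hierVar_stationary p L f M Λstar hmin hi
  have hx := thomasPivot_mul_eq (lamExt_zero L Λstar) hsys
    fun k hk hkL => ((hb k hk hkL).trans_le (hpiv k hk hkL).1).ne'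
  refine ⟨fun j => u j / thomasPivot (a + b) u j, fun h hh hhL => ?_, fun j hjI => ?_⟩
  · rw [eq_prod_Icc_mul_of_eq_mul_succ (x := lamExt L Λstar) (L := L) (fun j hj hjL => ?_) hh
      (by omega), lamExt_succ_self, mul_one]
    rw [div_mul_eq_mul_div, eq_div_iff ((hb j hj hjL).trans_le (hpiv j hj hjL).1).ne', mul_comm,
      hx j hj hjL]
  · obtain ⟨hj, hjL⟩ := mem_Icc.1 hjI
    have hρ : quasiOptCoeff p f j = u j / b j := by
      simp only [quasiOptCoeff, u, b]
      field_simp [(hM' j hjL).ne']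
    have hratio : batchRatio M j = a j / (a j + b j) := by
      simp only [batchRatio, a, b]
      field_simp [(hvar j hj hjL).ne', (hM' j hjL).ne', (hM' (j - 1) (by omega)).ne']
      ring
    rw [hρ, hratio]
    exact ⟨abs_div_le_abs_div_of_le (hb j hj hjL) (hpiv j hj hjL).1,
      abs_div_sub_div_le (hb j hj hjL) (hpiv j hj hjL).1 (hpiv j hj hjL).2⟩

end Minimizer

/-- with positive variances `Var_p(f_h) > 0` and quasi-optimal coefficients
`λ̂*_h = Cov_p(f_{h+1}, f_h)/Var_p(f_h)`, there is a constant `C ≥ 0`, independent of the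
batch sizes, such that for all positive decreasing batch sizes `M_0 ≥ … ≥ M_L` the unique
minimizer `Λ*` of the estimator's variance satisfies
`|∏_{j=h}^{L} λ̂*_j − λ*_h| ≤ C·μ̄_h` with `μ̄_h = max_{h ≤ k ≤ L} M_k/(M_{k−1}+M_k)`. -/
theorem stmt9 {Z : Type*} [MeasurableSpace Z] (p : Measure Z) [IsProbabilityMeasure p]
    (L : ℕ) (f : ℕ → Z → ℝ)
    (hf : ∀ h, 1 ≤ h → h ≤ L + 1 → MemLp (f h) 2 p)
    (hvar : ∀ h, 1 ≤ h → h ≤ L → 0 < variance (f h) p) :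
    ∃ C : ℝ, 0 ≤ C ∧
      ∀ M : ℕ → ℕ, (∀ h, h ≤ L → 0 < M h) →
        (∀ h, 1 ≤ h → h ≤ L → M h ≤ M (h - 1)) →
        ∀ Λstar : Fin L → ℝ,
          (∀ Λ : Fin L → ℝ, Λ ≠ Λstar →
            hierVar p L f M (lamExt L Λstar) < hierVar p L f M (lamExt L Λ)) →
          ∀ h, 1 ≤ h → ∀ hL : h ≤ L,
            |(∏ j ∈ Finset.Icc h L, covP p (f (j + 1)) (f j) / variance (f j) p)
                - lamExt L Λstar h|
              ≤ C * (Finset.Icc h L).sup' (Finset.nonempty_Icc.mpr hL)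
                  (fun k => (M k : ℝ) / ((M (k - 1) : ℝ) + (M k : ℝ))) := by
  set K : ℝ := 1 + ∑ j ∈ Icc 1 L, |quasiOptCoeff p f j|
  have hK : ∀ j ∈ Icc 1 L, |quasiOptCoeff p f j| ≤ K := fun j hj => by
    linarith [single_le_sum (fun i _ => abs_nonneg (quasiOptCoeff p f i)) hj]
  have hK1 : 1 ≤ K := by
    linarith [sum_nonneg fun j (_ : j ∈ Icc 1 L) => abs_nonneg (quasiOptCoeff p f j)]
  refine ⟨K ^ (L + 1) * L, by positivity, fun M hM _ Λstar hmin h hh hL => ?_⟩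
  obtain ⟨γ, hprod, hγ⟩ := hierVar_minimizer_factorization p L f M
    (fun k hk hkL => hf k hk (by omega)) hvar hM Λstar fun Λ => by
      rcases eq_or_ne Λ Λstar with rfl | hne
      exacts [le_rfl, (hmin Λ hne).le]
  set S := (Icc h L).sup' (nonempty_Icc.mpr hL) (batchRatio M)
  have hsub : Icc h L ⊆ Icc 1 L := Icc_subset_Icc_left hh
  have hcard : #(Icc h L) ≤ L := by rw [Nat.card_Icc]; omega
  have hS : 0 ≤ S := le_sup'_of_le _ (left_mem_Icc.mpr hL) (batchRatio_nonneg M h)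
  change |∏ j ∈ Icc h L, quasiOptCoeff p f j - lamExt L Λstar h| ≤ K ^ (L + 1) * L * S
  rw [hprod h hh hL]
  calc |∏ j ∈ Icc h L, quasiOptCoeff p f j - ∏ j ∈ Icc h L, γ j|
      ≤ K ^ #(Icc h L) * ∑ j ∈ Icc h L, |quasiOptCoeff p f j - γ j| :=
        abs_prod_sub_prod_le _ hK1 (fun j hj => hK j (hsub hj))
          (fun j hj => (hγ j (hsub hj)).1.trans (hK j (hsub hj)))
    _ ≤ K ^ L * (#(Icc h L) • (K * S)) := by
        gcongr
        exact sum_le_card_nsmul _ _ _ fun j hj => (hγ j (hsub hj)).2.trans <|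
          mul_le_mul (hK j (hsub hj)) (le_sup' (batchRatio M) hj) (batchRatio_nonneg M j)
            (by linarith)
    _ = K ^ (L + 1) * #(Icc h L) * S := by rw [nsmul_eq_mul, pow_succ]; ring
    _ ≤ K ^ (L + 1) * L * S := by gcongr
end

section
/- Let (Y_k, W_k, E_k)_{k=1}^M be i.i.d. triples of real square-integrable random variables (the M triples mutually independent and identically distributed), with E[Y_k] = m, Var(Y_k) = ν² > 0, Var(W_k) > 0, E[E_k | (Y_k, W_k)] = 0 almost surely, and E[E_k²] ≤ σ²/N. Set λ* = Cov(Y_1, W_1)/Var(W_1), let ρ be the correlation coefficient of Y_1 and W_1, and define the mean-field control-variate estimator A = (1/M)∑_{k=1}^M (Y_k + E_k) − λ* ( (1/M)∑_{k=1}^M W_k − E[W_1] ). Then E[ (m − A)² ]^{1/2} ≤ (1 − ρ²)^{1/2} ν / M^{1/2} + σ / N^{1/2}. -/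
/-!
With the residuals `X k = Y k - λ* W k`, the error `m - A` is minus the sum of the centred average
of the `X k` and the average of the noises `E k`, so by Minkowski its `L²` norm is at most the sum
of their two `L²` norms. The residuals are pairwise independent and identically distributed with
variance `Var Y - Cov(Y, W)² / Var W = (1 - ρ²) ν²`, so the first norm is `√((1 - ρ²) ν² / M)`;
the second is at most the average of the `‖E k‖₂ ≤ σ / √N`.
-/

open MeasureTheory ProbabilityTheory

/-- Correlation coefficient of two real random variables. -/
noncomputable def corr {Ω : Type*} [MeasurableSpace Ω] (P : Measure Ω) (X Y : Ω → ℝ) : ℝ :=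
  cov P X Y / (Real.sqrt (variance X P) * Real.sqrt (variance Y P))

open Finset

namespace MeasureTheory

variable {α : Type*} [MeasurableSpace α] {μ : Measure α}

lemma lpNorm_two_eq_sqrt_integral_sq {f : α → ℝ} (hf : AEStronglyMeasurable f μ) :
    lpNorm f 2 μ = √(∫ x, f x ^ 2 ∂μ) := by
  rw [lpNorm_eq_integral_norm_rpow_toReal two_ne_zero ENNReal.ofNat_ne_top hf,
    Real.sqrt_eq_rpow]
  simp [Real.norm_eq_abs, sq_abs]

lemma lpNorm_average_le {ι : Type*} {s : Finset ι} {f : ι → α → ℝ} {p : ENNReal} {b : ℝ}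
    (hp : 1 ≤ p) (hf : ∀ i ∈ s, MemLp (f i) p μ) (hb : 0 ≤ b)
    (hfb : ∀ i ∈ s, lpNorm (f i) p μ ≤ b) :
    lpNorm (fun x => (#s : ℝ)⁻¹ * ∑ i ∈ s, f i x) p μ ≤ b := by
  have hscale : lpNorm (fun x => (#s : ℝ)⁻¹ * ∑ i ∈ s, f i x) p μ
      = (#s : ℝ)⁻¹ * lpNorm (∑ i ∈ s, f i) p μ := by
    simpa [sum_fn, Pi.smul_def] using lpNorm_const_smul (p := p) (#s : ℝ)⁻¹ (∑ i ∈ s, f i) μ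
  calc lpNorm (fun x => (#s : ℝ)⁻¹ * ∑ i ∈ s, f i x) p μ
      ≤ (#s : ℝ)⁻¹ * ∑ i ∈ s, lpNorm (f i) p μ := by
        rw [hscale]; gcongr; exact lpNorm_sum_le hf hp
    _ ≤ (#s : ℝ)⁻¹ * (#s * b) := by
        gcongr; simpa using sum_le_card_nsmul s _ b hfb
    _ ≤ b := by
        rcases eq_or_ne (#s : ℝ) 0 with h | h
        · simpa [h] using hb
        · rw [inv_mul_cancel_left₀ h]

end MeasureTheory

namespace ProbabilityTheory

variable {Ω : Type*} [MeasurableSpace Ω] {μ : Measure Ω}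

lemma sqrt_variance_eq_lpNorm {X : Ω → ℝ} (hX : AEStronglyMeasurable X μ) :
    √(Var[X; μ]) = lpNorm (fun ω => X ω - μ[X]) 2 μ := by
  rw [variance_eq_integral hX.aemeasurable,
    lpNorm_two_eq_sqrt_integral_sq (f := fun ω => X ω - μ[X]) (by fun_prop)]

lemma variance_sub_cov_div_variance_mul [IsFiniteMeasure μ] {Y W : Ω → ℝ}
    (hY : MemLp Y 2 μ) (hW : MemLp W 2 μ) :
    Var[fun ω => Y ω - cov μ Y W / Var[W; μ] * W ω; μ] = (1 - corr μ Y W ^ 2) * Var[Y; μ] := by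
  set c := cov μ Y W
  set v := Var[W; μ]
  have hcov : c = cov[Y, W; μ] := rfl
  have hresidual : Var[fun ω => Y ω - c / v * W ω; μ] = Var[Y; μ] - c ^ 2 / v := by
    rw [variance_fun_sub hY (hW.const_mul _), covariance_const_mul_right, variance_const_mul,
      ← hcov]
    rcases eq_or_ne v 0 with hv | hv
    · simp [hv]
    · field_simp
      ring
  have hcorr : corr μ Y W ^ 2 = c ^ 2 / (Var[Y; μ] * v) := by
    rw [corr, div_pow, mul_pow, Real.sq_sqrt (variance_nonneg _ _),
      Real.sq_sqrt (variance_nonneg _ _)]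
  rw [hresidual, hcorr]
  -- If `Var Y = 0` then `corr = 0` (division by zero), and nonnegativity of the residual
  -- variance `- c ^ 2 / v` forces `c ^ 2 / v = 0`.
  rcases eq_or_ne Var[Y; μ] 0 with hY0 | hY0
  · have h0 : 0 ≤ c ^ 2 / v := div_nonneg (sq_nonneg c) (variance_nonneg _ _)
    have h1 := hresidual ▸ variance_nonneg (fun ω => Y ω - c / v * W ω) μ
    rw [hY0] at h1 ⊢
    linarith
  · rw [one_sub_mul, div_mul_eq_mul_div, mul_comm (Var[Y; μ]) v, mul_div_mul_right _ _ hY0]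

lemma variance_average_of_pairwise_indepFun {ι : Type*} {s : Finset ι} {X : ι → Ω → ℝ} {v : ℝ}
    (hX : ∀ i ∈ s, MemLp (X i) 2 μ) (hindep : Set.Pairwise ↑s fun i j => IndepFun (X i) (X j) μ)
    (hv : ∀ i ∈ s, Var[X i; μ] = v) :
    Var[fun ω => (#s : ℝ)⁻¹ * ∑ i ∈ s, X i ω; μ] = v / #s := by
  have hsum : Var[fun ω => ∑ i ∈ s, X i ω; μ] = #s * v := by
    rw [← sum_fn, IndepFun.variance_sum hX hindep, sum_congr rfl hv]
    simp
  rw [variance_const_mul, hsum]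
  rcases eq_or_ne (#s : ℝ) 0 with h | h
  · simp [h]
  · field_simp

lemma lpNorm_average_sub_integral {ι : Type*} {s : Finset ι} {X : ι → Ω → ℝ} {v : ℝ}
    (hX : ∀ i ∈ s, MemLp (X i) 2 μ) (hindep : Set.Pairwise ↑s fun i j => IndepFun (X i) (X j) μ)
    (hv : ∀ i ∈ s, Var[X i; μ] = v) :
    lpNorm (fun ω => (#s : ℝ)⁻¹ * ∑ i ∈ s, X i ω - ∫ ω', (#s : ℝ)⁻¹ * ∑ i ∈ s, X i ω' ∂μ) 2 μ
      = √(v / #s) := by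
  rw [← variance_average_of_pairwise_indepFun hX hindep hv,
    sqrt_variance_eq_lpNorm ((memLp_finsetSum s hX).const_mul _).1]

lemma sqrt_integral_sq_const_sub_average_le [IsFiniteMeasure μ] {ι : Type*} {s : Finset ι}
    (hs : s.Nonempty) {X E : ι → Ω → ℝ} {a v b : ℝ}
    (hX : ∀ i ∈ s, MemLp (X i) 2 μ) (hE : ∀ i ∈ s, MemLp (E i) 2 μ)
    (hindep : Set.Pairwise ↑s fun i j => IndepFun (X i) (X j) μ)
    (hmean : ∀ i ∈ s, ∫ ω, X i ω ∂μ = a) (hvar : ∀ i ∈ s, Var[X i; μ] = v)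
    (hEb : ∀ i ∈ s, lpNorm (E i) 2 μ ≤ b) :
    √(∫ ω, (a - (#s : ℝ)⁻¹ * ∑ i ∈ s, (X i ω + E i ω)) ^ 2 ∂μ) ≤ √(v / #s) + b := by
  set S : Ω → ℝ := fun ω => (#s : ℝ)⁻¹ * ∑ i ∈ s, X i ω
  set noise : Ω → ℝ := fun ω => (#s : ℝ)⁻¹ * ∑ i ∈ s, E i ω
  have hS : MemLp (fun ω => S ω - ∫ ω', S ω' ∂μ) 2 μ :=
    ((memLp_finsetSum s hX).const_mul _).sub (memLp_const _)
  have hnoise : MemLp noise 2 μ := (memLp_finsetSum s hE).const_mul _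
  have hSmean : ∫ ω, S ω ∂μ = a := by
    rw [integral_const_mul, integral_finsetSum _ fun i hi => (hX i hi).integrable one_le_two,
      sum_congr rfl hmean, sum_const, nsmul_eq_mul, inv_mul_cancel_left₀ (by simp [hs.ne_empty])]
  have herror : ∀ ω, a - (#s : ℝ)⁻¹ * ∑ i ∈ s, (X i ω + E i ω)
      = -((S ω - ∫ ω', S ω' ∂μ) + noise ω) := fun ω => by
    rw [hSmean, sum_add_distrib]
    ring
  obtain ⟨i, hi⟩ := hs
  calc √(∫ ω, (a - (#s : ℝ)⁻¹ * ∑ i ∈ s, (X i ω + E i ω)) ^ 2 ∂μ)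
      = lpNorm ((fun ω => S ω - ∫ ω', S ω' ∂μ) + noise) 2 μ := by
        rw [lpNorm_two_eq_sqrt_integral_sq (hS.add hnoise).1]
        simp_rw [herror, neg_sq]
        rfl
    _ ≤ _ := lpNorm_add_le hS one_le_two
    _ ≤ √(v / #s) + b := by
        rw [lpNorm_average_sub_integral hX hindep hvar]
        gcongr
        exact lpNorm_average_le one_le_two hE (lpNorm_nonneg.trans (hEb i hi)) hEb

end ProbabilityTheory

theorem stmt12_general {Ω : Type*} [MeasurableSpace Ω] (P : Measure Ω) [IsProbabilityMeasure P]
    (M N : ℕ) (hM : 0 < M)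
    (Y W E : Fin M → Ω → ℝ)
    (hY2 : ∀ k, MemLp (Y k) 2 P) (hW2 : ∀ k, MemLp (W k) 2 P) (hE2 : ∀ k, MemLp (E k) 2 P)
    (hindep : iIndepFun
      (fun k ω => (Y k ω, W k ω, E k ω)) P)
    (hident : ∀ j k, Measure.map (fun ω => (Y j ω, W j ω, E j ω)) P
      = Measure.map (fun ω => (Y k ω, W k ω, E k ω)) P)
    (m ν σ : ℝ) (hν : 0 ≤ ν) (hσ : 0 ≤ σ)
    (hmean : ∀ k, ∫ ω, Y k ω ∂P = m)
    (hvar : ∀ k, variance (Y k) P = ν ^ 2)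
    (hnoise : ∀ k, ∫ ω, (E k ω) ^ 2 ∂P ≤ σ ^ 2 / N)
    (lamStar ρ : ℝ)
    (hlam : lamStar = cov P (Y ⟨0, hM⟩) (W ⟨0, hM⟩) / variance (W ⟨0, hM⟩) P)
    (hρ : ρ = corr P (Y ⟨0, hM⟩) (W ⟨0, hM⟩))
    (A : Ω → ℝ)
    (hA : ∀ ω, A ω = (M : ℝ)⁻¹ * ∑ k, (Y k ω + E k ω)
      - lamStar * ((M : ℝ)⁻¹ * ∑ k, W k ω - ∫ ω', W ⟨0, hM⟩ ω' ∂P)) :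
    Real.sqrt (∫ ω, (m - A ω) ^ 2 ∂P)
      ≤ Real.sqrt (1 - ρ ^ 2) * ν / Real.sqrt M + σ / Real.sqrt N := by
  set k₀ : Fin M := ⟨0, hM⟩
  have hsample : ∀ k, IdentDistrib (fun ω => (Y k ω, W k ω, E k ω))
      (fun ω => (Y k₀ ω, W k₀ ω, E k₀ ω)) P P := fun k =>
    ⟨(hY2 k).aemeasurable.prodMk ((hW2 k).aemeasurable.prodMk (hE2 k).aemeasurable),
      (hY2 k₀).aemeasurable.prodMk ((hW2 k₀).aemeasurable.prodMk (hE2 k₀).aemeasurable),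
      hident k k₀⟩
  have hresidual : Measurable fun p : ℝ × ℝ × ℝ => p.1 - lamStar * p.2.1 := by fun_prop
  set X : Fin M → Ω → ℝ := fun k ω => Y k ω - lamStar * W k ω
  have hXvar : ∀ k, Var[X k; P] = (1 - ρ ^ 2) * ν ^ 2 := fun k => by
    rw [← hvar k₀, hρ, ← variance_sub_cov_div_variance_mul (hY2 k₀) (hW2 k₀), ← hlam]
    exact ((hsample k).comp hresidual).variance_eq
  have hXmean : ∀ k, ∫ ω, X k ω ∂P = m - lamStar * ∫ ω, W k₀ ω ∂P := fun k => by
    rw [show ∫ ω, X k ω ∂P = ∫ ω, X k₀ ω ∂P from ((hsample k).comp hresidual).integral_eq,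
      integral_sub ((hY2 k₀).integrable one_le_two) (((hW2 k₀).integrable one_le_two).const_mul _),
      integral_const_mul, hmean]
  have hEk : ∀ k, lpNorm (E k) 2 P ≤ σ / √N := fun k => by
    rw [lpNorm_two_eq_sqrt_integral_sq (hE2 k).1, ← Real.sqrt_sq hσ,
      ← Real.sqrt_div' _ N.cast_nonneg]
    exact Real.sqrt_le_sqrt (hnoise k)
  have herror : ∀ ω, m - A ω
      = (m - lamStar * ∫ ω, W k₀ ω ∂P) - (M : ℝ)⁻¹ * ∑ k, (X k ω + E k ω) := fun ω => by
    simp only [hA, X, sum_add_distrib, sum_sub_distrib, ← mul_sum]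
    ring
  have h := sqrt_integral_sq_const_sub_average_le (X := X) (univ_nonempty_iff.2 ⟨k₀⟩)
    (fun k _ => (hY2 k).sub ((hW2 k).const_mul lamStar)) (fun k _ => hE2 k)
    (fun i _ j _ hij => (hindep.indepFun hij).comp hresidual hresidual)
    (fun k _ => hXmean k) (fun k _ => hXvar k) (fun k _ => hEk k)
  rw [card_univ, Fintype.card_fin, Real.sqrt_div' _ M.cast_nonneg,
    Real.sqrt_mul' _ (sq_nonneg ν), Real.sqrt_sq hν] at h
  simpa only [herror] using h

/-- for i.i.d. triples `(Y_k, W_k, E_k)` with `E[Y_k] = m`, `Var(Y_k) = ν² > 0`,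
`Var(W_k) > 0`, `E[E_k | (Y_k, W_k)] = 0` a.s., `E[E_k²] ≤ σ²/N`, the mean-field
control-variate estimator `A = (1/M)∑(Y_k + E_k) − λ*((1/M)∑W_k − E[W_1])` with
`λ* = Cov(Y_1,W_1)/Var(W_1)` satisfies
`E[(m − A)²]^{1/2} ≤ (1 − ρ²)^{1/2} ν/M^{1/2} + σ/N^{1/2}`. -/
theorem stmt12 {Ω : Type*} [MeasurableSpace Ω] (P : Measure Ω) [IsProbabilityMeasure P]
    (M N : ℕ) (hM : 0 < M) (hN : 0 < N)
    (Y W E : Fin M → Ω → ℝ)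
    (hY2 : ∀ k, MemLp (Y k) 2 P) (hW2 : ∀ k, MemLp (W k) 2 P) (hE2 : ∀ k, MemLp (E k) 2 P)
    (hindep : iIndepFun
      (fun k ω => (Y k ω, W k ω, E k ω)) P)
    (hident : ∀ j k, Measure.map (fun ω => (Y j ω, W j ω, E j ω)) P
      = Measure.map (fun ω => (Y k ω, W k ω, E k ω)) P)
    (m ν σ : ℝ) (hν : 0 ≤ ν) (hσ : 0 ≤ σ)
    (hmean : ∀ k, ∫ ω, Y k ω ∂P = m)
    (hvar : ∀ k, variance (Y k) P = ν ^ 2) (hνpos : 0 < ν ^ 2)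
    (hvarW : ∀ k, 0 < variance (W k) P)
    (hcond : ∀ k, P[E k|MeasurableSpace.comap (fun ω => (Y k ω, W k ω))
      (inferInstance : MeasurableSpace (ℝ × ℝ))] =ᵐ[P] 0)
    (hnoise : ∀ k, ∫ ω, (E k ω) ^ 2 ∂P ≤ σ ^ 2 / N)
    (lamStar ρ : ℝ)
    (hlam : lamStar = cov P (Y ⟨0, hM⟩) (W ⟨0, hM⟩) / variance (W ⟨0, hM⟩) P)
    (hρ : ρ = corr P (Y ⟨0, hM⟩) (W ⟨0, hM⟩))
    (A : Ω → ℝ)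
    (hA : ∀ ω, A ω = (M : ℝ)⁻¹ * ∑ k, (Y k ω + E k ω)
      - lamStar * ((M : ℝ)⁻¹ * ∑ k, W k ω - ∫ ω', W ⟨0, hM⟩ ω' ∂P)) :
    Real.sqrt (∫ ω, (m - A ω) ^ 2 ∂P)
      ≤ Real.sqrt (1 - ρ ^ 2) * ν / Real.sqrt M + σ / Real.sqrt N :=
  stmt12_general P M N hM Y W E hY2 hW2 hE2 hindep hident m ν σ hν hσ hmean hvar hnoise lamStar ρ
    hlam hρ A hA
end

section
/- Let σ > 0, m ∈ (−1, 1), C > 0, and define f : (−1, 1) → ℝ by f(w) = C (1+w)^{(1+m)/σ² − 1} (1−w)^{(1−m)/σ² − 1}. Then for every w ∈ (−1, 1) the zero-flux identity (m − w) f(w) = (σ²/2) · (d/dw)[ (1 − w²) f(w) ] holds; consequently f is a stationary solution of the Fokker–Planck opinion-formation equation ∂_t f + ∂_w[(m − w) f] = (σ²/2) ∂²_w[(1 − w²) f] on (−1, 1). -/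
open Real Set

/-!
Writing `f = C (1+w)^(p-1) (1-w)^(q-1)` with `p = (1+m)/σ²`, `q = (1-m)/σ²`, the factor `1 - w²`
raises both exponents by one, and differentiating `(1+w)^p (1-w)^q` gives back
`(p (1-w) - q (1+w)) f = (2/σ²) (m - w) f`. This is the zero-flux identity; differentiating it once
more on the open interval gives stationarity.
-/

lemma hasDerivAt_one_add_rpow_mul_one_sub_rpow {p q w : ℝ} (hw : w ∈ Ioo (-1 : ℝ) 1) :
    HasDerivAt (fun x : ℝ => (1 + x) ^ p * (1 - x) ^ q)
      ((p * (1 - w) - q * (1 + w)) * ((1 + w) ^ (p - 1) * (1 - w) ^ (q - 1))) w := by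
  have hpos : 0 < 1 + w := by linarith [hw.1]
  have hneg : 0 < 1 - w := by linarith [hw.2]
  have hplus : HasDerivAt (fun x : ℝ => (1 + x) ^ p) (p * (1 + w) ^ (p - 1)) w := by
    simpa using ((hasDerivAt_id w).const_add 1).rpow_const (p := p) (Or.inl hpos.ne')
  have hminus : HasDerivAt (fun x : ℝ => (1 - x) ^ q) (-(q * (1 - w) ^ (q - 1))) w := by
    simpa using ((hasDerivAt_id w).const_sub 1).rpow_const (p := q) (Or.inl hneg.ne')
  refine (hplus.mul hminus).congr_deriv ?_
  rw [rpow_sub_one hpos.ne', rpow_sub_one hneg.ne']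
  field_simp
  ring

lemma one_sub_sq_mul_rpow_sub_one {p q x : ℝ} (hx : x ∈ Ioo (-1 : ℝ) 1) :
    (1 - x ^ 2) * ((1 + x) ^ (p - 1) * (1 - x) ^ (q - 1)) = (1 + x) ^ p * (1 - x) ^ q := by
  have hpos : 0 < 1 + x := by linarith [hx.1]
  have hneg : 0 < 1 - x := by linarith [hx.2]
  rw [rpow_sub_one hpos.ne', rpow_sub_one hneg.ne']
  field_simp
  ring

lemma deriv_one_sub_sq_mul_of_eqOn_beta {p q C w : ℝ} {f : ℝ → ℝ}
    (hf : ∀ x ∈ Ioo (-1 : ℝ) 1, f x = C * (1 + x) ^ (p - 1) * (1 - x) ^ (q - 1))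
    (hw : w ∈ Ioo (-1 : ℝ) 1) :
    deriv (fun x => (1 - x ^ 2) * f x) w = (p * (1 - w) - q * (1 + w)) * f w := by
  have heq : (fun x => (1 - x ^ 2) * f x) =ᶠ[nhds w]
      fun x => C * ((1 + x) ^ p * (1 - x) ^ q) :=
    Filter.eventuallyEq_of_mem (isOpen_Ioo.mem_nhds hw) fun x hx => by
      rw [hf x hx, ← one_sub_sq_mul_rpow_sub_one hx]
      ring
  rw [heq.deriv_eq, ((hasDerivAt_one_add_rpow_mul_one_sub_rpow hw).const_mul C).deriv, hf w hw]
  ring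

theorem stmt16_general (σ m C : ℝ) (hσ : 0 < σ)
    (f : ℝ → ℝ)
    (hf : ∀ w ∈ Set.Ioo (-1 : ℝ) 1,
      f w = C * (1 + w) ^ ((1 + m) / σ ^ 2 - 1) * (1 - w) ^ ((1 - m) / σ ^ 2 - 1)) :
    (∀ w ∈ Set.Ioo (-1 : ℝ) 1,
      (m - w) * f w = σ ^ 2 / 2 * deriv (fun w' => (1 - w' ^ 2) * f w') w) ∧
    (∀ w ∈ Set.Ioo (-1 : ℝ) 1,
      deriv (fun w' => (m - w') * f w') w
        = σ ^ 2 / 2 * deriv (fun w' => deriv (fun w'' => (1 - w'' ^ 2) * f w'') w') w) := by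
  have zeroFlux : ∀ w ∈ Ioo (-1 : ℝ) 1,
      (m - w) * f w = σ ^ 2 / 2 * deriv (fun w' => (1 - w' ^ 2) * f w') w := by
    intro w hw
    rw [deriv_one_sub_sq_mul_of_eqOn_beta hf hw]
    field_simp
    ring
  refine ⟨zeroFlux, fun w hw => ?_⟩
  rw [(Filter.eventuallyEq_of_mem (isOpen_Ioo.mem_nhds hw) zeroFlux).deriv_eq, deriv_const_mul_field]

/-- the Beta-type profile
`f(w) = C (1+w)^{(1+m)/σ² − 1} (1−w)^{(1−m)/σ² − 1}` on `(−1,1)` satisfies the zero-flux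
identity `(m − w) f(w) = (σ²/2) d/dw[(1 − w²) f(w)]`; consequently it is a stationary
solution of the Fokker–Planck opinion-formation equation
`∂_t f + ∂_w[(m − w) f] = (σ²/2) ∂²_w[(1 − w²) f]` on `(−1,1)`. -/
theorem stmt16 (σ m C : ℝ) (hσ : 0 < σ) (hm : m ∈ Set.Ioo (-1 : ℝ) 1) (hC : 0 < C)
    (f : ℝ → ℝ)
    (hf : ∀ w ∈ Set.Ioo (-1 : ℝ) 1,
      f w = C * (1 + w) ^ ((1 + m) / σ ^ 2 - 1) * (1 - w) ^ ((1 - m) / σ ^ 2 - 1)) :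
    (∀ w ∈ Set.Ioo (-1 : ℝ) 1,
      (m - w) * f w = σ ^ 2 / 2 * deriv (fun w' => (1 - w' ^ 2) * f w') w) ∧
    (∀ w ∈ Set.Ioo (-1 : ℝ) 1,
      deriv (fun w' => (m - w') * f w') w
        = σ ^ 2 / 2 * deriv (fun w' => deriv (fun w'' => (1 - w'' ^ 2) * f w'') w') w) :=
  stmt16_general σ m C hσ f hf
end

section
/- Let σ > 0, λ > 0, m > 0, C > 0, set μ = 1 + 2λ/σ², and define f : (0, ∞) → ℝ by f(w) = C w^{−(1+μ)} exp( −(μ − 1) m / w ). Then for every w > 0 the zero-flux identity λ (m − w) f(w) = (σ²/2) · (d/dw)[ w² f(w) ] holds; consequently f is a stationary solution of the Fokker–Planck wealth-distribution equation ∂_t f + λ ∂_w[(m − w) f] = (σ²/2) ∂²_w[ w² f ] on (0, ∞). -/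
/-!
Writing `k = (μ - 1) m`, one has `w² f(w) = C w^{1-μ} e^{-k/w}`, whose derivative is
`C w^{-(1+μ)} e^{-k/w} ((1 - μ) w + k) = (μ - 1)(m - w) f(w)`; since `(σ²/2)(μ - 1) = λ` this is
the zero-flux identity. The stationary equation is its derivative, as both sides of the flux
identity agree on the open set `(0, ∞)`.
-/

open Real

theorem hasDerivAt_rpow_mul_exp_neg_div {x : ℝ} (hx : 0 < x) (p k : ℝ) :
    HasDerivAt (fun y : ℝ => y ^ (p + 2) * exp (-k / y))
      (((p + 2) * x + k) * x ^ p * exp (-k / x)) x := by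
  have hpow : HasDerivAt (fun y : ℝ => y ^ (p + 2)) ((p + 2) * x ^ (p + 2 - 1)) x :=
    hasDerivAt_rpow_const (Or.inl hx.ne')
  have hinv : HasDerivAt (fun y : ℝ => -k / y) (k / x ^ 2) x := by
    simpa [div_eq_mul_inv, neg_mul_neg] using (hasDerivAt_inv hx.ne').const_mul (-k)
  refine (hpow.mul hinv.exp).congr_deriv ?_
  rw [show p + 2 - 1 = p + 1 by ring, rpow_add_one hx.ne', rpow_add hx, rpow_two]
  field_simp

theorem hasDerivAt_sq_mul_inverseGamma {C μ m w : ℝ} (hw : 0 < w) :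
    HasDerivAt (fun y : ℝ => y ^ 2 * (C * y ^ (-(1 + μ)) * exp (-((μ - 1) * m) / y)))
      ((μ - 1) * (m - w) * (C * w ^ (-(1 + μ)) * exp (-((μ - 1) * m) / w))) w := by
  have h := (hasDerivAt_rpow_mul_exp_neg_div hw (-(1 + μ)) ((μ - 1) * m)).const_mul C
  refine (h.congr_deriv (by ring)).congr_of_eventuallyEq ?_
  filter_upwards [Ioi_mem_nhds hw] with y hy
  rw [rpow_add hy, rpow_two]
  ring

theorem stmt17_general (σ lam m C : ℝ) (hσ : 0 < σ)
    (μ : ℝ) (hμ : μ = 1 + 2 * lam / σ ^ 2)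
    (f : ℝ → ℝ)
    (hf : ∀ w ∈ Set.Ioi (0 : ℝ), f w = C * w ^ (-(1 + μ)) * Real.exp (-((μ - 1) * m) / w)) :
    (∀ w ∈ Set.Ioi (0 : ℝ),
      lam * (m - w) * f w = σ ^ 2 / 2 * deriv (fun w' => w' ^ 2 * f w') w) ∧
    (∀ w ∈ Set.Ioi (0 : ℝ),
      deriv (fun w' => lam * ((m - w') * f w')) w
        = σ ^ 2 / 2 * deriv (fun w' => deriv (fun w'' => w'' ^ 2 * f w'') w') w) := by
  have hdrift : σ ^ 2 / 2 * (μ - 1) = lam := by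
    rw [hμ]
    field_simp
    ring
  have hflux : ∀ w ∈ Set.Ioi (0 : ℝ),
      lam * (m - w) * f w = σ ^ 2 / 2 * deriv (fun w' => w' ^ 2 * f w') w := by
    intro w hw
    have hsq : (fun y => y ^ 2 * f y) =ᶠ[nhds w]
        fun y => y ^ 2 * (C * y ^ (-(1 + μ)) * exp (-((μ - 1) * m) / y)) := by
      filter_upwards [Ioi_mem_nhds hw] with y hy
      rw [hf y hy]
    rw [((hasDerivAt_sq_mul_inverseGamma hw).congr_of_eventuallyEq hsq).deriv, hf w hw, ← hdrift]
    ring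
  refine ⟨hflux, fun w hw => ?_⟩
  have hflux_near : (fun w' => lam * ((m - w') * f w'))
      =ᶠ[nhds w] fun w' => σ ^ 2 / 2 * deriv (fun w'' => w'' ^ 2 * f w'') w' := by
    filter_upwards [Ioi_mem_nhds hw] with x hx
    rw [← mul_assoc, hflux x hx]
  rw [hflux_near.deriv_eq, deriv_const_mul_field]

/-- the inverse-Gamma-type profile
`f(w) = C w^{−(1+μ)} exp(−(μ−1)m/w)` on `(0,∞)`, with `μ = 1 + 2λ/σ²`, satisfies the
zero-flux identity `λ(m − w) f(w) = (σ²/2) d/dw[w² f(w)]`; consequently it is a stationary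
solution of the Fokker–Planck wealth-distribution equation
`∂_t f + λ ∂_w[(m − w) f] = (σ²/2) ∂²_w[w² f]` on `(0,∞)`. -/
theorem stmt17 (σ lam m C : ℝ) (hσ : 0 < σ) (hlam : 0 < lam) (hm : 0 < m) (hC : 0 < C)
    (μ : ℝ) (hμ : μ = 1 + 2 * lam / σ ^ 2)
    (f : ℝ → ℝ)
    (hf : ∀ w ∈ Set.Ioi (0 : ℝ), f w = C * w ^ (-(1 + μ)) * Real.exp (-((μ - 1) * m) / w)) :
    (∀ w ∈ Set.Ioi (0 : ℝ),
      lam * (m - w) * f w = σ ^ 2 / 2 * deriv (fun w' => w' ^ 2 * f w') w) ∧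
    (∀ w ∈ Set.Ioi (0 : ℝ),
      deriv (fun w' => lam * ((m - w') * f w')) w
        = σ ^ 2 / 2 * deriv (fun w' => deriv (fun w'' => w'' ^ 2 * f w'') w') w) :=
  stmt17_general σ lam m C hσ μ hμ f hf
end

section
/- Let σ > 0, p > 0, m ∈ (−1, 1), C > 0, and define f : (−1, 1) → ℝ by f(w) = C (1+w)^{−2 + pm/(2σ²)} (1−w)^{−2 − pm/(2σ²)} exp( −p(1 − m w)/(σ²(1 − w²)) ). Then for every w ∈ (−1, 1) the zero-flux identity p (m − w) f(w) = (σ²/2) · (d/dw)[ (1 − w²)² f(w) ] holds; consequently f is a stationary solution of the Fokker–Planck opinion-formation equation ∂_t f + ∂_w[ p (m − w) f ] = (σ²/2) ∂²_w[ (1 − w²)² f ] on (−1, 1). -/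
/-!
With `κ = pm/(2σ²)`, multiplying by `(1 - w²)²` cancels the exponents `-2`, so
`g = (1 - w²)² f = C ((1+w)/(1-w))^κ exp(-p(1 - mw)/(σ²(1 - w²)))`. Its logarithmic derivative is
`2κ/(1 - w²) + p(m(1 + w²) - 2w)/(σ²(1 - w²)²) = 2p(m - w)/(σ²(1 - w²)²)`,
i.e. `(σ²/2) g' = p(m - w) f`: the flux vanishes. Differentiating this identity on the open
interval gives stationarity.
-/

open Real Set Filter Topology

namespace OpinionFokkerPlanck

variable {p m s : ℝ}

noncomputable def maxwellian (p m s C w : ℝ) : ℝ :=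
  C * (1 + w) ^ (-2 + p * m / (2 * s)) * (1 - w) ^ (-2 - p * m / (2 * s))
    * exp (-(p * (1 - m * w)) / (s * (1 - w ^ 2)))

lemma one_sub_sq_pos {w : ℝ} (hw : w ∈ Ioo (-1 : ℝ) 1) : 0 < 1 - w ^ 2 := by
  nlinarith [hw.1, hw.2]

lemma hasDerivAt_rpow_mul_rpow_neg (κ : ℝ) {w : ℝ} (hw : w ∈ Ioo (-1 : ℝ) 1) :
    HasDerivAt (fun w => (1 + w) ^ κ * (1 - w) ^ (-κ))
      ((1 + w) ^ κ * (1 - w) ^ (-κ) * (2 * κ / (1 - w ^ 2))) w := by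
  have hplus : 0 < 1 + w := by linarith [hw.1]
  have hminus : 0 < 1 - w := by linarith [hw.2]
  have h1 := ((hasDerivAt_id w).const_add 1).rpow_const (p := κ) (Or.inl hplus.ne')
  have h2 := ((hasDerivAt_id w).const_sub 1).rpow_const (p := -κ) (Or.inl hminus.ne')
  have hsq : 1 - w ^ 2 ≠ 0 := (one_sub_sq_pos hw).ne'
  refine (h1.mul h2).congr_deriv ?_
  simp only [id, rpow_sub_one hplus.ne', rpow_sub_one hminus.ne']
  field_simp
  ring

lemma hasDerivAt_maxwellian_exponent (hs : s ≠ 0) {w : ℝ} (hw : w ∈ Ioo (-1 : ℝ) 1) :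
    HasDerivAt (fun w => -(p * (1 - m * w)) / (s * (1 - w ^ 2)))
      (p * (m * (1 + w ^ 2) - 2 * w) / (s * (1 - w ^ 2) ^ 2)) w := by
  have hden : s * (1 - w ^ 2) ≠ 0 := mul_ne_zero hs (one_sub_sq_pos hw).ne'
  have hnum : HasDerivAt (fun w => -(p * (1 - m * w))) (p * m) w := by
    simpa using ((((hasDerivAt_id w).const_mul m).const_sub 1).const_mul p).fun_neg
  have hdiff : HasDerivAt (fun w => s * (1 - w ^ 2)) (s * -(2 * w)) w := by
    simpa using ((hasDerivAt_pow 2 w).const_sub 1).const_mul s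
  refine (hnum.div hdiff hden).congr_deriv ?_
  field_simp
  ring

lemma one_sub_sq_sq_mul_maxwellian (C : ℝ) {w : ℝ} (hw : w ∈ Ioo (-1 : ℝ) 1) :
    (1 - w ^ 2) ^ 2 * maxwellian p m s C w
      = C * ((1 + w) ^ (p * m / (2 * s)) * (1 - w) ^ (-(p * m / (2 * s))))
        * exp (-(p * (1 - m * w)) / (s * (1 - w ^ 2))) := by
  have hplus : 0 < 1 + w := by linarith [hw.1]
  have hminus : 0 < 1 - w := by linarith [hw.2]
  rw [maxwellian, sub_eq_add_neg (-2 : ℝ), add_comm (-2 : ℝ), add_comm (-2 : ℝ),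
    rpow_add hplus, rpow_add hminus]
  norm_num [rpow_neg_ofNat]
  field_simp
  ring

lemma hasDerivAt_one_sub_sq_sq_mul_maxwellian (hs : s ≠ 0) (C : ℝ) {w : ℝ}
    (hw : w ∈ Ioo (-1 : ℝ) 1) :
    HasDerivAt (fun w => (1 - w ^ 2) ^ 2 * maxwellian p m s C w)
      (2 * p * (m - w) / s * maxwellian p m s C w) w := by
  have hsq : 1 - w ^ 2 ≠ 0 := (one_sub_sq_pos hw).ne'
  have hsimp : (fun w => (1 - w ^ 2) ^ 2 * maxwellian p m s C w) =ᶠ[𝓝 w]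
      fun w => C * ((1 + w) ^ (p * m / (2 * s)) * (1 - w) ^ (-(p * m / (2 * s))))
        * exp (-(p * (1 - m * w)) / (s * (1 - w ^ 2))) := by
    filter_upwards [isOpen_Ioo.mem_nhds hw] with x hx
    exact one_sub_sq_sq_mul_maxwellian C hx
  have hmaxwellian : maxwellian p m s C w
      = C * ((1 + w) ^ (p * m / (2 * s)) * (1 - w) ^ (-(p * m / (2 * s))))
        * exp (-(p * (1 - m * w)) / (s * (1 - w ^ 2))) / (1 - w ^ 2) ^ 2 := by
    rw [← one_sub_sq_sq_mul_maxwellian C hw]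
    field_simp
  refine ((((hasDerivAt_rpow_mul_rpow_neg _ hw).const_mul C).mul
    (hasDerivAt_maxwellian_exponent hs hw).exp).congr_deriv ?_).congr_of_eventuallyEq hsimp
  rw [hmaxwellian]
  field_simp
  ring

theorem deriv_eq_const_mul_deriv_deriv {𝕜 : Type*} [NontriviallyNormedField 𝕜]
    {F G : 𝕜 → 𝕜} {U : Set 𝕜} {c x : 𝕜} (hU : IsOpen U) (h : ∀ y ∈ U, F y = c * deriv G y)
    (hx : x ∈ U) : deriv F x = c * deriv (deriv G) x := by
  have hF : F =ᶠ[𝓝 x] fun y => c * deriv G y := eventually_of_mem (hU.mem_nhds hx) h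
  rw [hF.deriv_eq, deriv_const_mul_field]

end OpinionFokkerPlanck

theorem stmt18_general (σ p m C : ℝ) (hσ : 0 < σ)
    (f : ℝ → ℝ)
    (hf : ∀ w ∈ Set.Ioo (-1 : ℝ) 1,
      f w = C * (1 + w) ^ (-2 + p * m / (2 * σ ^ 2)) * (1 - w) ^ (-2 - p * m / (2 * σ ^ 2))
        * Real.exp (-(p * (1 - m * w)) / (σ ^ 2 * (1 - w ^ 2)))) :
    (∀ w ∈ Set.Ioo (-1 : ℝ) 1,
      p * (m - w) * f w = σ ^ 2 / 2 * deriv (fun w' => (1 - w' ^ 2) ^ 2 * f w') w) ∧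
    (∀ w ∈ Set.Ioo (-1 : ℝ) 1,
      deriv (fun w' => p * (m - w') * f w') w
        = σ ^ 2 / 2 * deriv (fun w' => deriv (fun w'' => (1 - w'' ^ 2) ^ 2 * f w'') w') w) := by
  have hs : σ ^ 2 ≠ 0 := by positivity
  have zero_flux : ∀ w ∈ Ioo (-1 : ℝ) 1,
      p * (m - w) * f w = σ ^ 2 / 2 * deriv (fun w' => (1 - w' ^ 2) ^ 2 * f w') w := by
    intro w hw
    have hf_near : (fun w' => (1 - w' ^ 2) ^ 2 * f w') =ᶠ[𝓝 w]
        fun w' => (1 - w' ^ 2) ^ 2 * OpinionFokkerPlanck.maxwellian p m (σ ^ 2) C w' := by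
      filter_upwards [isOpen_Ioo.mem_nhds hw] with x hx
      rw [hf x hx, OpinionFokkerPlanck.maxwellian]
    rw [hf_near.deriv_eq,
      (OpinionFokkerPlanck.hasDerivAt_one_sub_sq_sq_mul_maxwellian hs C hw).deriv, hf w hw,
      OpinionFokkerPlanck.maxwellian]
    field_simp
  exact ⟨zero_flux, fun w hw =>
    OpinionFokkerPlanck.deriv_eq_const_mul_deriv_deriv isOpen_Ioo zero_flux hw⟩

/-- the Maxwellian-like profile
`f(w) = C (1+w)^{−2 + pm/(2σ²)} (1−w)^{−2 − pm/(2σ²)} exp(−p(1 − m w)/(σ²(1 − w²)))`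
on `(−1,1)` satisfies the zero-flux identity
`p(m − w) f(w) = (σ²/2) d/dw[(1 − w²)² f(w)]`; consequently it is a stationary solution of
the Fokker–Planck opinion-formation equation
`∂_t f + ∂_w[p(m − w) f] = (σ²/2) ∂²_w[(1 − w²)² f]` on `(−1,1)`. -/
theorem stmt18 (σ p m C : ℝ) (hσ : 0 < σ) (hp : 0 < p) (hm : m ∈ Set.Ioo (-1 : ℝ) 1)
    (hC : 0 < C)
    (f : ℝ → ℝ)
    (hf : ∀ w ∈ Set.Ioo (-1 : ℝ) 1,
      f w = C * (1 + w) ^ (-2 + p * m / (2 * σ ^ 2)) * (1 - w) ^ (-2 - p * m / (2 * σ ^ 2))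
        * Real.exp (-(p * (1 - m * w)) / (σ ^ 2 * (1 - w ^ 2)))) :
    (∀ w ∈ Set.Ioo (-1 : ℝ) 1,
      p * (m - w) * f w = σ ^ 2 / 2 * deriv (fun w' => (1 - w' ^ 2) ^ 2 * f w') w) ∧
    (∀ w ∈ Set.Ioo (-1 : ℝ) 1,
      deriv (fun w' => p * (m - w') * f w') w
        = σ ^ 2 / 2 * deriv (fun w' => deriv (fun w'' => (1 - w'' ^ 2) ^ 2 * f w'') w') w) :=
  stmt18_general σ p m C hσ f hf
end
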